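/- arXiv:1808.07339 — 9 statements merged into one kernel-verified Lean document; each statement's English description precedes it below -/
import Mathlib

section
/- There exist a measurable space (Ω, F), probability measures Q1, Q2, a level p ∈ (0,1), and comonotonic bounded random variables X, Y such that MES_p^{Q1,Q2}(X+Y) < MES_p^{Q1,Q2}(X) + MES_p^{Q1,Q2}(Y). Hence Max-ES is not comonotonic-additive in general. -/
/-!
Under a single measure `Q`, ES is additive on the comonotonic pair `1_A`, `1_B` with `A ⊆ B`: the
quantile function of `1_A + 1_B` is the sum of those of `1_A` and `1_B`, and
`ES_p^Q(1_A) = Q(A) / (1 - p)` as long as `Q(A) ≤ 1 - p`. Taking the maximum over two measures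
breaks this as soon as `Q₁` charges `A` more than `Q₂` but `B` less: the two maxima on the right
are then attained at different measures, and `max (a₁ + b₁) (a₂ + b₂) < max a₁ a₂ + max b₁ b₂`
whenever `a₂ < a₁` and `b₁ < b₂`.
-/

open MeasureTheory Set

noncomputable def VaR {Ω : Type*} [MeasurableSpace Ω] (Q : Measure Ω) (X : Ω → ℝ) (p : ℝ) : ℝ :=
  sInf {x : ℝ | p ≤ (Q {ω | X ω ≤ x}).toReal}

noncomputable def ES {Ω : Type*} [MeasurableSpace Ω] (Q : Measure Ω) (X : Ω → ℝ) (p : ℝ) : ℝ :=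
  (1 - p)⁻¹ * ∫ q in p..1, VaR Q X q

def Comonotonic {Ω : Type*} (X Y : Ω → ℝ) : Prop :=
  ∀ ω ω', 0 ≤ (X ω - X ω') * (Y ω - Y ω')

theorem max_add_lt_max_add_max {a b c d : ℝ} (hac : c < a) (hbd : b < d) :
    max (a + b) (c + d) < max a c + max b d := by
  rw [max_eq_left hac.le, max_eq_right hbd.le]
  exact max_lt (by linarith) (by linarith)

theorem abs_indicator_one_le_one {α : Type*} (s : Set α) (a : α) :
    |s.indicator (1 : α → ℝ) a| ≤ 1 := by
  by_cases h : a ∈ s <;> simp [h]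

theorem comonotonic_indicator_one_of_subset {Ω : Type*} {A B : Set Ω} (hAB : A ⊆ B) :
    Comonotonic (A.indicator 1) (B.indicator 1) := by
  intro ω ω'
  have hω := @hAB ω
  have hω' := @hAB ω'
  simp only [Set.indicator, Pi.one_apply]
  split_ifs <;> norm_num <;> tauto

theorem integral_indicator_Ioi_one {p c : ℝ} (hpc : p ≤ c) (hc : c ≤ 1) :
    ∫ q in p..1, (Ioi c).indicator 1 q = 1 - c := by
  rw [intervalIntegral.integral_of_le (hpc.trans hc), integral_indicator_one measurableSet_Ioi,
    measureReal_restrict_apply measurableSet_Ioi, inter_comm, Ioc_inter_Ioi, max_eq_right hpc,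
    Real.volume_real_Ioc_of_le hc]

section VaR

variable {Ω : Type*} [MeasurableSpace Ω] {Q : Measure Ω} {X : Ω → ℝ} {q c : ℝ}

theorem VaR_eq_of_forall_le_iff (h : ∀ x, q ≤ Q.real {ω | X ω ≤ x} ↔ c ≤ x) : VaR Q X q = c := by
  rw [VaR, show {x | q ≤ (Q {ω | X ω ≤ x}).toReal} = Ici c from Set.ext h, csInf_Ici]

variable [IsProbabilityMeasure Q] {A B : Set Ω}

theorem measureReal_indicator_add_indicator_le (hA : MeasurableSet A) (hB : MeasurableSet B)
    (hAB : A ⊆ B) (x : ℝ) :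
    Q.real {ω | A.indicator 1 ω + B.indicator 1 ω ≤ x} =
      if x < 0 then 0 else if x < 1 then 1 - Q.real B else if x < 2 then 1 - Q.real A else 1 := by
  split_ifs <;>
    [convert measureReal_empty (μ := Q); convert probReal_compl_eq_one_sub (μ := Q) hB using 2;
      convert probReal_compl_eq_one_sub (μ := Q) hA using 2; convert probReal_univ (μ := Q) using 2] <;>
    ext ω <;> by_cases hωA : ω ∈ A <;> by_cases hωB : ω ∈ B <;>
    simp [Set.indicator, hωA, hωB] <;> grind

theorem VaR_indicator_add_indicator (hA : MeasurableSet A) (hB : MeasurableSet B) (hAB : A ⊆ B)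
    (hq : q ∈ Ioc 0 1) :
    VaR Q (fun ω => A.indicator 1 ω + B.indicator 1 ω) q =
      (Ioi (1 - Q.real A)).indicator 1 q + (Ioi (1 - Q.real B)).indicator 1 q := by
  refine VaR_eq_of_forall_le_iff fun x => ?_
  have hQAB : Q.real A ≤ Q.real B := measureReal_mono hAB
  have hQB : Q.real B ≤ 1 := measureReal_le_one
  rw [measureReal_indicator_add_indicator_le hA hB hAB]
  obtain ⟨hq0, hq1⟩ := hq
  simp only [Set.indicator, mem_Ioi, Pi.one_apply]
  split_ifs <;> constructor <;> intro <;> linarith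

theorem VaR_indicator (hB : MeasurableSet B) (hq : q ∈ Ioc 0 1) :
    VaR Q (B.indicator 1) q = (Ioi (1 - Q.real B)).indicator 1 q := by
  have h := VaR_indicator_add_indicator (Q := Q) MeasurableSet.empty hB (empty_subset B) hq
  simpa [indicator_of_notMem (notMem_Ioi.2 hq.2)] using h

end VaR

theorem intervalIntegrable_indicator_Ioi_one {c a b : ℝ} :
    IntervalIntegrable ((Ioi c).indicator (1 : ℝ → ℝ)) volume a b :=
  intervalIntegrable_iff.2 ((integrableOn_const (by simp)).indicator measurableSet_Ioi)

section ES

variable {Ω : Type*} [MeasurableSpace Ω] {Q : Measure Ω} [IsProbabilityMeasure Q] {A B : Set Ω}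
  {p : ℝ}

theorem ES_indicator_add_indicator_eq (hA : MeasurableSet A) (hB : MeasurableSet B) (hAB : A ⊆ B)
    (hp : p ∈ Ioo 0 1) (hQB : Q.real B ≤ 1 - p) :
    ES Q (fun ω => A.indicator 1 ω + B.indicator 1 ω) p = (Q.real A + Q.real B) / (1 - p) := by
  have hQA : Q.real A ≤ Q.real B := measureReal_mono hAB
  have hpq : uIcc p 1 ⊆ Ioc 0 1 := by
    rw [uIcc_of_le hp.2.le]
    exact Icc_subset_Ioc hp.1 le_rfl
  rw [ES,
    intervalIntegral.integral_congr fun q hq => VaR_indicator_add_indicator hA hB hAB (hpq hq),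
    intervalIntegral.integral_add intervalIntegrable_indicator_Ioi_one
      intervalIntegrable_indicator_Ioi_one,
    integral_indicator_Ioi_one (by linarith) (by linarith [measureReal_nonneg (μ := Q) (s := A)]),
    integral_indicator_Ioi_one (by linarith) (by linarith [measureReal_nonneg (μ := Q) (s := B)])]
  ring

theorem ES_indicator (hB : MeasurableSet B) (hp : p ∈ Ioo 0 1) (hQB : Q.real B ≤ 1 - p) :
    ES Q (B.indicator 1) p = Q.real B / (1 - p) := by
  simpa using ES_indicator_add_indicator_eq (Q := Q) MeasurableSet.empty hB (empty_subset B) hp hQB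

theorem ES_indicator_add_indicator (hA : MeasurableSet A) (hB : MeasurableSet B) (hAB : A ⊆ B)
    (hp : p ∈ Ioo 0 1) (hQB : Q.real B ≤ 1 - p) :
    ES Q (fun ω => A.indicator 1 ω + B.indicator 1 ω) p =
      ES Q (A.indicator 1) p + ES Q (B.indicator 1) p := by
  rw [ES_indicator_add_indicator_eq hA hB hAB hp hQB,
    ES_indicator hA hp ((measureReal_mono hAB).trans hQB), ES_indicator hB hp hQB, add_div]

end ES

theorem isProbabilityMeasure_ofReal_smul_dirac_add {α : Type*} [MeasurableSpace α] {t : ℝ}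
    (ht₀ : 0 ≤ t) (ht₁ : t ≤ 1) (x y : α) :
    IsProbabilityMeasure
      (ENNReal.ofReal t • Measure.dirac x + ENNReal.ofReal (1 - t) • Measure.dirac y) := by
  constructor
  simp only [Measure.add_apply, Measure.smul_apply, measure_univ, smul_eq_mul, mul_one]
  rw [← ENNReal.ofReal_add ht₀ (sub_nonneg.2 ht₁), add_sub_cancel, ENNReal.ofReal_one]

theorem max_ES_indicator_add_indicator_lt {Ω : Type*} [MeasurableSpace Ω] {Q₁ Q₂ : Measure Ω}
    [IsProbabilityMeasure Q₁] [IsProbabilityMeasure Q₂] {A B : Set Ω} {p : ℝ}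
    (hA : MeasurableSet A) (hB : MeasurableSet B) (hAB : A ⊆ B) (hp : p ∈ Ioo 0 1)
    (hQA : Q₂.real A < Q₁.real A) (hQB : Q₁.real B < Q₂.real B)
    (hQ₂B : Q₂.real B ≤ 1 - p) :
    max (ES Q₁ (fun ω => A.indicator 1 ω + B.indicator 1 ω) p)
        (ES Q₂ (fun ω => A.indicator 1 ω + B.indicator 1 ω) p) <
      max (ES Q₁ (A.indicator 1) p) (ES Q₂ (A.indicator 1) p) +
        max (ES Q₁ (B.indicator 1) p) (ES Q₂ (B.indicator 1) p) := by
  have hQ₁B : Q₁.real B ≤ 1 - p := hQB.le.trans hQ₂B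
  have hQ₁A : Q₁.real A ≤ 1 - p := (measureReal_mono hAB).trans hQ₁B
  have hp' : 0 < 1 - p := sub_pos.2 hp.2
  rw [ES_indicator_add_indicator hA hB hAB hp hQ₁B,
    ES_indicator_add_indicator hA hB hAB hp hQ₂B]
  apply max_add_lt_max_add_max
  · rw [ES_indicator hA hp hQ₁A, ES_indicator hA hp (hQA.le.trans hQ₁A)]
    gcongr
  · rw [ES_indicator hB hp hQ₁B, ES_indicator hB hp hQ₂B]
    gcongr

theorem mes_not_comonotonic_additive :
    ∃ (Ω : Type) (_ : MeasurableSpace Ω) (Q1 Q2 : Measure Ω)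
      (_ : IsProbabilityMeasure Q1) (_ : IsProbabilityMeasure Q2)
      (p : ℝ) (_ : p ∈ Set.Ioo (0 : ℝ) 1) (X Y : Ω → ℝ),
      Measurable X ∧ Measurable Y ∧
      (∃ M, ∀ ω, |X ω| ≤ M) ∧ (∃ M, ∀ ω, |Y ω| ≤ M) ∧
      Comonotonic X Y ∧
      max (ES Q1 (fun ω => X ω + Y ω) p) (ES Q2 (fun ω => X ω + Y ω) p)
        < max (ES Q1 X p) (ES Q2 X p) + max (ES Q1 Y p) (ES Q2 Y p) := by
  let Q₁ : Measure (Fin 3) :=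
    ENNReal.ofReal (1 / 4) • Measure.dirac 0 + ENNReal.ofReal (1 - 1 / 4) • Measure.dirac 2
  let Q₂ : Measure (Fin 3) :=
    ENNReal.ofReal (1 / 3) • Measure.dirac 1 + ENNReal.ofReal (1 - 1 / 3) • Measure.dirac 2
  have hQ₁ : IsProbabilityMeasure Q₁ :=
    isProbabilityMeasure_ofReal_smul_dirac_add (by norm_num) (by norm_num) _ _
  have hQ₂ : IsProbabilityMeasure Q₂ :=
    isProbabilityMeasure_ofReal_smul_dirac_add (by norm_num) (by norm_num) _ _
  have hA : MeasurableSet ({0} : Set (Fin 3)) := .of_discrete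
  have hB : MeasurableSet ({0, 1} : Set (Fin 3)) := .of_discrete
  have hAB : ({0} : Set (Fin 3)) ⊆ {0, 1} := by simp
  refine ⟨Fin 3, inferInstance, Q₁, Q₂, hQ₁, hQ₂, 1 / 2, ⟨by norm_num, by norm_num⟩, _, _,
    measurable_one.indicator hA, measurable_one.indicator hB,
    ⟨1, abs_indicator_one_le_one _⟩, ⟨1, abs_indicator_one_le_one _⟩,
    comonotonic_indicator_one_of_subset hAB,
    max_ES_indicator_add_indicator_lt hA hB hAB ⟨by norm_num, by norm_num⟩ ?_ ?_ ?_⟩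
  all_goals simp [Q₁, Q₂, measureReal_def] <;> norm_num
end

section
/- Let X1,...,Xn be independent real-valued random variables under a probability measure P with distribution functions F1,...,Fn, and let U be uniform on [0,1] under P. Then max_i F_i^{-1}(U) is first-order stochastically dominated by max_i X_i; consequently ES_p^P(max_i F_i^{-1}(U)) ≤ ES_p^P(max_i X_i) for every p ∈ (0,1). This shows iMES_p^Q ≤ rMES_p^Q. -/
open MeasureTheory Set ProbabilityTheory

/-- Generalized inverse of a cdf. -/
noncomputable def invCdf (F : ℝ → ℝ) (t : ℝ) : ℝ := sInf {x : ℝ | t ≤ F x}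

/-!
Write `Y = max_i F_i⁻¹(U)` and `Z = max_i X_i`. Since `F_i⁻¹(u) ≤ x` as soon as `0 < u ≤ F_i(x)`,
the event `{Y ≤ x}` contains `{0 < U ≤ min_i F_i(x)}`, which has probability `min_i F_i(x)`. On the
other hand `{Z ≤ x} ⊆ {X_j ≤ x}` for every `j`, so `P(Z ≤ x) ≤ min_i F_i(x)`. Hence the cdf of `Y`
dominates that of `Z`, so `VaR_q(Y) ≤ VaR_q(Z)` for every level `q`, and integrating over
`q ∈ [p, 1]` compares the expected shortfalls.
-/

section InvCdf

variable {F G : ℝ → ℝ} {a b p s t x : ℝ}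

lemma setOf_le_subset_Ici (h0 : ∀ x < a, F x ≤ 0) (ht : 0 < t) : {x | t ≤ F x} ⊆ Ici a :=
  fun x hx => not_lt.1 fun hxa => (ht.trans_le hx).not_ge (h0 x hxa)

lemma invCdf_le_of_le (h0 : ∀ x < a, F x ≤ 0) (ht : 0 < t) (hx : t ≤ F x) : invCdf F t ≤ x :=
  csInf_le ⟨a, setOf_le_subset_Ici h0 ht⟩ hx

/-- For `t ≤ 0` the defining set is all of `ℝ`, whose infimum is the junk value `0`. -/
lemma le_invCdf (hF : ∀ x, 0 ≤ F x) (h0 : ∀ x < a, F x ≤ 0) (ha : a ≤ 0) : a ≤ invCdf F t := by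
  rcases le_or_gt t 0 with ht | ht
  · have huniv : {x | t ≤ F x} = univ := eq_univ_of_forall fun x => ht.trans (hF x)
    rw [invCdf, huniv, Real.sInf_univ]
    exact ha
  · exact Real.le_sInf (setOf_le_subset_Ici h0 ht) ha

lemma invCdf_le_invCdf (hFG : ∀ x, t ≤ G x → s ≤ F x) (h0 : ∀ x < a, F x ≤ 0) (hs : 0 < s)
    (hb : t ≤ G b) : invCdf F s ≤ invCdf G t :=
  csInf_le_csInf ⟨a, setOf_le_subset_Ici h0 hs⟩ ⟨b, hb⟩ hFG

lemma intervalIntegrable_invCdf (h0 : ∀ x < a, F x ≤ 0) (h1 : 1 ≤ F b) (hp : 0 < p)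
    (hp1 : p ≤ 1) : IntervalIntegrable (invCdf F) volume p 1 := by
  refine MonotoneOn.intervalIntegrable ?_
  rw [uIcc_of_le hp1]
  intro s hs t ht hst
  exact invCdf_le_invCdf (fun x hx => hst.trans hx) h0 (hp.trans_le hs.1) (ht.2.trans h1)

lemma integral_invCdf_le_integral_invCdf (hGF : ∀ x, G x ≤ F x) (h0 : ∀ x < a, F x ≤ 0)
    (h1 : 1 ≤ G b) (hp : 0 < p) (hp1 : p ≤ 1) :
    ∫ q in p..1, invCdf F q ≤ ∫ q in p..1, invCdf G q := by
  have hF := intervalIntegrable_invCdf h0 (h1.trans (hGF b)) hp hp1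
  have hG := intervalIntegrable_invCdf (fun x hx => (hGF x).trans (h0 x hx)) h1 hp hp1
  refine intervalIntegral.integral_mono_on hp1 hF hG fun q hq => ?_
  exact invCdf_le_invCdf (fun x hx => hx.trans (hGF x)) h0 (hp.trans_le hq.1) (hq.2.trans h1)

end InvCdf

section RiskMeasures

variable {Ω : Type*} [MeasurableSpace Ω] {P : Measure Ω}

lemma measure_setOf_le_of_lt {Y : Ω → ℝ} {a y : ℝ} (hY : ∀ ω, a ≤ Y ω) (hy : y < a) :
    P {ω | Y ω ≤ y} = 0 := by
  have hempty : {ω | Y ω ≤ y} = ∅ :=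
    eq_empty_of_forall_notMem fun ω hω => (hy.trans_le (hY ω)).not_ge hω
  rw [hempty, measure_empty]

lemma ES_le_ES_of_measure_le [IsProbabilityMeasure P] {Y Z : Ω → ℝ} {a b p : ℝ}
    (hdom : ∀ x, P {ω | Z ω ≤ x} ≤ P {ω | Y ω ≤ x}) (hY : ∀ ω, a ≤ Y ω) (hZ : ∀ ω, Z ω ≤ b)
    (hp : 0 < p) (hp1 : p ≤ 1) : ES P Y p ≤ ES P Z p := by
  refine mul_le_mul_of_nonneg_left ?_ (inv_nonneg.2 (sub_nonneg.2 hp1))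
  -- `VaR P Y` unfolds to `invCdf` of the cdf `x ↦ (P {Y ≤ x}).toReal`.
  refine integral_invCdf_le_integral_invCdf (a := a) (b := b)
    (fun x => ENNReal.toReal_mono (measure_ne_top P _) (hdom x)) (fun x hx => ?_) ?_ hp hp1
  · rw [measure_setOf_le_of_lt hY hx, ENNReal.toReal_zero]
  · simp [hZ]

lemma measure_iSup_le_le_measure_iSup_invCdf_le [IsProbabilityMeasure P] {ι : Type*} [Finite ι]
    [Nonempty ι] {X : ι → Ω → ℝ} {F : ι → ℝ → ℝ} {U : Ω → ℝ} {a : ℝ}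
    (hF : ∀ i x, F i x = (P {ω | X i ω ≤ x}).toReal) (h0 : ∀ i, ∀ y < a, F i y ≤ 0)
    (hU : ∀ t ∈ Icc (0 : ℝ) 1, P {ω | U ω ≤ t} = ENNReal.ofReal t) (x : ℝ) :
    P {ω | (⨆ i, X i ω) ≤ x} ≤ P {ω | (⨆ i, invCdf (F i) (U ω)) ≤ x} := by
  obtain ⟨j, hj⟩ := Finite.exists_min fun i => F i x
  have hFj : F j x ∈ Icc (0 : ℝ) 1 := by
    rw [hF]
    exact ⟨ENNReal.toReal_nonneg,
      ENNReal.toReal_le_of_le_ofReal zero_le_one (by simpa using prob_le_one)⟩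
  have hU_pos : ∀ᵐ ω ∂P, 0 < U ω := by
    simpa [ae_iff] using hU 0 ⟨le_rfl, zero_le_one⟩
  calc P {ω | (⨆ i, X i ω) ≤ x}
      ≤ P {ω | X j ω ≤ x} :=
        measure_mono fun ω (hω : _ ≤ x) => (le_ciSup (finite_range _).bddAbove j).trans hω
    _ = P {ω | U ω ≤ F j x} := by rw [hU _ hFj, hF, ENNReal.ofReal_toReal (measure_ne_top P _)]
    _ ≤ P {ω | (⨆ i, invCdf (F i) (U ω)) ≤ x} := by
        refine measure_mono_ae (hU_pos.mono fun ω hω hUx => ?_)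
        exact ciSup_le fun i => invCdf_le_of_le (h0 i) hω (hUx.trans (hj i))

end RiskMeasures

theorem imes_le_rmes_general {Ω : Type*} [MeasurableSpace Ω]
    (P : Measure Ω) [IsProbabilityMeasure P]
    (n : ℕ) (hn : 0 < n) (X : Fin n → Ω → ℝ)
    (hXb : ∀ i, ∃ M, ∀ ω, |X i ω| ≤ M)
    (F : Fin n → ℝ → ℝ) (hF : ∀ i x, F i x = (P {ω | X i ω ≤ x}).toReal)
    (U : Ω → ℝ)
    (hUnif : ∀ t ∈ Set.Icc (0 : ℝ) 1, P {ω | U ω ≤ t} = ENNReal.ofReal t) :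
    (∀ x : ℝ, P {ω | (⨆ i, X i ω) ≤ x} ≤ P {ω | (⨆ i, invCdf (F i) (U ω)) ≤ x}) ∧
    (∀ p ∈ Set.Ioo (0 : ℝ) 1,
      ES P (fun ω => ⨆ i, invCdf (F i) (U ω)) p ≤ ES P (fun ω => ⨆ i, X i ω) p) := by
  let j : Fin n := ⟨0, hn⟩
  have : Nonempty (Fin n) := ⟨j⟩
  choose M hM using hXb
  obtain ⟨C, hMC⟩ := Finite.exists_le fun i => |M i|
  have hXC : ∀ i ω, |X i ω| ≤ C := fun i ω => (hM i ω).trans ((le_abs_self _).trans (hMC i))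
  have hF_nonneg : ∀ i y, 0 ≤ F i y := fun i y => (hF i y).symm ▸ ENNReal.toReal_nonneg
  have hF0 : ∀ i, ∀ y < -C, F i y ≤ 0 := fun i y hy => by
    rw [hF, measure_setOf_le_of_lt (fun ω => neg_le_of_abs_le (hXC i ω)) hy, ENNReal.toReal_zero]
  have hdom := measure_iSup_le_le_measure_iSup_invCdf_le hF hF0 hUnif
  refine ⟨hdom, fun p hp =>
    ES_le_ES_of_measure_le (a := -C) (b := C) hdom (fun ω => ?_) (fun ω => ?_) hp.1 hp.2.le⟩
  · exact (le_invCdf (hF_nonneg j) (hF0 j) (neg_nonpos.2 ((abs_nonneg _).trans (hMC j)))).trans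
      (le_ciSup (f := fun i => invCdf (F i) (U ω)) (finite_range _).bddAbove j)
  · exact ciSup_le fun i => le_of_abs_le (hXC i ω)

theorem imes_le_rmes {Ω : Type*} [MeasurableSpace Ω]
    (P : Measure Ω) [IsProbabilityMeasure P]
    (n : ℕ) (hn : 0 < n) (X : Fin n → Ω → ℝ)
    (hXm : ∀ i, Measurable (X i)) (hXb : ∀ i, ∃ M, ∀ ω, |X i ω| ≤ M)
    (hindep : iIndepFun X P)
    (F : Fin n → ℝ → ℝ) (hF : ∀ i x, F i x = (P {ω | X i ω ≤ x}).toReal)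
    (U : Ω → ℝ) (hU : Measurable U)
    (hUnif : ∀ t ∈ Set.Icc (0 : ℝ) 1, P {ω | U ω ≤ t} = ENNReal.ofReal t) :
    (∀ x : ℝ, P {ω | (⨆ i, X i ω) ≤ x} ≤ P {ω | (⨆ i, invCdf (F i) (U ω)) ≤ x}) ∧
    (∀ p ∈ Set.Ioo (0 : ℝ) 1,
      ES P (fun ω => ⨆ i, invCdf (F i) (U ω)) p ≤ ES P (fun ω => ⨆ i, X i ω) p) :=
  imes_le_rmes_general P n hn X hXb F hF U hUnif
end

section
/- Let p ∈ (0,1) and Q = {Q1,...,Qn} distinct probability measures. The replicated Max-ES rMES_p^Q(X) = ES_p^P(max_{i=1,...,n} X_i), where X1,...,Xn are independent under P with X_i distributed as X under Q_i, is a coherent and comonotonic-additive risk measure on bounded random variables. -/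
open MeasureTheory Set

def BddRV {Ω : Type*} (X : Ω → ℝ) : Prop := ∃ M, ∀ ω, |X ω| ≤ M

/-- Replicated Max-ES: the ES, under the product measure `Π_i Q_i`, of the maximum of
the independent copies `ω ↦ X (ω i)` (which are independent with `X (ω i) ∼ Q_i`-law of `X`). -/
noncomputable def rMES {Ω : Type*} [MeasurableSpace Ω] {n : ℕ} (Q : Fin n → Measure Ω)
    (X : Ω → ℝ) (p : ℝ) : ℝ :=
  ES (Measure.pi Q) (fun ω => ⨆ i, X (ω i)) p

/-!
Write `T X ω = max_i X (ω i)` on `(Fin n → Ω, Π Q_i)`, so that `rMES X = ES (T X)`. The map `T`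
commutes with adding constants and with positive scaling, is monotone and subadditive, and is
additive on comonotonic pairs, because comonotonic functions on a finite set attain their maxima
at a common index; for the same reason `T X` and `T Y` are again comonotonic. It therefore
suffices that `ES` is positively homogeneous, monotone, subadditive and comonotonic-additive
(cash invariance being comonotonic additivity with a constant). Except for subadditivity, these
already hold pointwise for the quantiles, through the Galois connection
`VaR q ≤ x ↔ q ≤ P (Z ≤ x)`. Subadditivity comes from the Rockafellar–Uryasev representation
`ES Z = min_z (z + E (Z - z)⁺ / (1 - p))`, proved with the layer-cake formula on both sides.
-/

open ProbabilityTheory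

lemma forall_abs_add_le {α : Type*} {U V : α → ℝ} {M N : ℝ} (hU : ∀ x, |U x| ≤ M)
    (hV : ∀ x, |V x| ≤ N) (x : α) : |U x + V x| ≤ M + N :=
  (abs_add_le _ _).trans (add_le_add (hU x) (hV x))

section Comonotonic

variable {α : Type*} {U V : α → ℝ}

lemma comonotonic_const_right (U : α → ℝ) (c : ℝ) : Comonotonic U fun _ => c := by
  simp [Comonotonic]

lemma Comonotonic.sublevel_subset_or (h : Comonotonic U V) (a b : ℝ) :
    {x | U x ≤ a} ⊆ {x | V x ≤ b} ∨ {x | V x ≤ b} ⊆ {x | U x ≤ a} := by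
  by_contra! hc
  obtain ⟨x, hxa, hxb⟩ := not_subset.1 hc.1
  obtain ⟨y, hyb, hya⟩ := not_subset.1 hc.2
  simp only [mem_ofPred_eq, not_le] at hxa hxb hyb hya
  nlinarith [h x y]

end Comonotonic

section VaR

variable {Ω : Type*} [MeasurableSpace Ω] {P : Measure Ω} {Z U V : Ω → ℝ} {M N q x : ℝ}

lemma measure_le_toReal_eq_zero (hM : ∀ ω, |Z ω| ≤ M) (hx : x < -M) :
    (P {ω | Z ω ≤ x}).toReal = 0 := by
  have : {ω | Z ω ≤ x} = ∅ :=
    eq_empty_of_forall_notMem fun ω hω => (hx.trans_le (neg_le_of_abs_le (hM ω))).not_ge hω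
  simp [this]

lemma bddBelow_VaR_set (hM : ∀ ω, |Z ω| ≤ M) (hq : 0 < q) :
    BddBelow {x : ℝ | q ≤ (P {ω | Z ω ≤ x}).toReal} := by
  refine ⟨-M, fun x hx => le_of_not_gt fun hlt => ?_⟩
  exact hq.not_ge (hx.trans_eq (measure_le_toReal_eq_zero hM hlt))

variable [IsProbabilityMeasure P]

lemma measure_le_toReal_eq_cdf_map (hZ : Measurable Z) (x : ℝ) :
    (P {ω | Z ω ≤ x}).toReal = cdf (P.map Z) x := by
  have := Measure.isProbabilityMeasure_map (μ := P) hZ.aemeasurable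
  rw [cdf_eq_real, measureReal_def, Measure.map_apply hZ measurableSet_Iic]
  rfl

lemma measure_le_toReal_mono (hZ : Measurable Z) :
    Monotone fun x => (P {ω | Z ω ≤ x}).toReal := by
  simpa only [measure_le_toReal_eq_cdf_map hZ] using (cdf (P.map Z)).mono

lemma measure_le_toReal_eq_one (hM : ∀ ω, |Z ω| ≤ M) :
    (P {ω | Z ω ≤ M}).toReal = 1 := by
  simp [fun ω => (abs_le.1 (hM ω)).2]

/-- The infimum defining `VaR` is attained, by right-continuity of the distribution function. -/
lemma le_measure_le_VaR (hZ : Measurable Z) (hM : ∀ ω, |Z ω| ≤ M) (hq : q ∈ Ioc 0 1) :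
    q ≤ (P {ω | Z ω ≤ VaR P Z q}).toReal := by
  set S := {x : ℝ | q ≤ (P {ω | Z ω ≤ x}).toReal}
  have hS : S.Nonempty := ⟨M, by simp [S, measure_le_toReal_eq_one hM, hq.2]⟩
  have hcont : ContinuousWithinAt (fun x => (P {ω | Z ω ≤ x}).toReal) (Ioi (sInf S)) (sInf S) := by
    simpa only [measure_le_toReal_eq_cdf_map hZ] using
      ((cdf (P.map Z)).right_continuous _).mono Ioi_subset_Ici_self
  refine ge_of_tendsto hcont (eventually_nhdsWithin_of_forall fun x hx => ?_)
  obtain ⟨y, hyS, hyx⟩ := exists_lt_of_csInf_lt hS hx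
  exact hyS.trans (measure_le_toReal_mono hZ hyx.le)

lemma VaR_le_iff (hZ : Measurable Z) (hM : ∀ ω, |Z ω| ≤ M) (hq : q ∈ Ioc 0 1) :
    VaR P Z q ≤ x ↔ q ≤ (P {ω | Z ω ≤ x}).toReal :=
  ⟨fun h => (le_measure_le_VaR hZ hM hq).trans (measure_le_toReal_mono hZ h),
    fun h => csInf_le (bddBelow_VaR_set hM hq.1) h⟩

lemma monotoneOn_VaR (hZ : Measurable Z) (hM : ∀ ω, |Z ω| ≤ M) :
    MonotoneOn (VaR P Z) (Ioc 0 1) := fun _ hq _ hq' hqq' =>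
  (VaR_le_iff (P := P) hZ hM hq).2 (hqq'.trans (le_measure_le_VaR hZ hM hq'))

lemma VaR_mono (hU : Measurable U) (hV : Measurable V) (hMU : ∀ ω, |U ω| ≤ M)
    (hMV : ∀ ω, |V ω| ≤ N) (hq : q ∈ Ioc 0 1) (h : ∀ ω, U ω ≤ V ω) :
    VaR P U q ≤ VaR P V q := by
  rw [VaR_le_iff (P := P) hU hMU hq]
  refine (le_measure_le_VaR (P := P) hV hMV hq).trans (ENNReal.toReal_mono (measure_ne_top _ _) ?_)
  exact measure_mono fun ω (hω : V ω ≤ _) => (h ω).trans hω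

lemma VaR_const (hq : q ∈ Ioc 0 1) (c : ℝ) : VaR P (fun _ => c) q = c := by
  refine eq_of_forall_ge_iff fun x => ?_
  rw [VaR_le_iff (P := P) measurable_const (M := |c|) (fun _ => le_rfl) hq]
  by_cases hcx : c ≤ x
  · simp [hcx, hq.2]
  · simp [hcx, hq.1]

lemma VaR_const_mul (hZ : Measurable Z) (hM : ∀ ω, |Z ω| ≤ M) (hq : q ∈ Ioc 0 1)
    {l : ℝ} (hl : 0 < l) : VaR P (fun ω => l * Z ω) q = l * VaR P Z q := by
  have hM' : ∀ ω, |l * Z ω| ≤ l * M := fun ω => by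
    rw [abs_mul, abs_of_pos hl]; exact mul_le_mul_of_nonneg_left (hM ω) hl.le
  refine eq_of_forall_ge_iff fun x => ?_
  have hset : {ω | l * Z ω ≤ x} = {ω | Z ω ≤ x / l} := by
    ext ω; simp only [le_div_iff₀ hl, mul_comm]
  rw [VaR_le_iff (P := P) (hZ.const_mul l) hM' hq, hset, ← VaR_le_iff (P := P) hZ hM hq, mul_comm,
    le_div_iff₀ hl]

lemma Comonotonic.VaR_add (h : Comonotonic U V) (hU : Measurable U) (hV : Measurable V)
    (hMU : ∀ ω, |U ω| ≤ M) (hMV : ∀ ω, |V ω| ≤ N) (hq : q ∈ Ioc 0 1) :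
    VaR P (fun ω => U ω + V ω) q = VaR P U q + VaR P V q := by
  set a := VaR P U q
  set b := VaR P V q
  have hW : Measurable fun ω => U ω + V ω := hU.add hV
  have hMW := forall_abs_add_le hMU hMV
  refine le_antisymm ?_ (le_of_not_gt fun hlt => ?_)
  · -- the smaller of the nested sets `{U ≤ a}`, `{V ≤ b}` has mass `≥ q`
    -- and lies in `{U + V ≤ a + b}`
    rw [VaR_le_iff (P := P) hW hMW hq]
    rcases h.sublevel_subset_or a b with hab | hba
    · refine (le_measure_le_VaR (P := P) hU hMU hq).trans (measureReal_mono fun ω hω => ?_)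
      exact add_le_add (show U ω ≤ a from hω) (hab hω)
    · refine (le_measure_le_VaR (P := P) hV hMV hq).trans (measureReal_mono fun ω hω => ?_)
      exact add_le_add (hba hω) (show V ω ≤ b from hω)
  · -- with `x = VaR (U + V) = (a - ε) + (b - ε)`, the set `{U + V ≤ x}` lies in the larger
    -- of the nested sets `{U ≤ a - ε}`, `{V ≤ b - ε}`, which both have mass `< q`
    set x := VaR P (fun ω => U ω + V ω) q
    set ε := (a + b - x) / 2
    have hε : 0 < ε := by simp only [ε]; linarith
    have hx : x = a - ε + (b - ε) := by simp only [ε]; ring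
    have hFa : (P {ω | U ω ≤ a - ε}).toReal < q :=
      not_le.1 fun h' => by linarith [(VaR_le_iff (P := P) hU hMU hq).2 h']
    have hFb : (P {ω | V ω ≤ b - ε}).toReal < q :=
      not_le.1 fun h' => by linarith [(VaR_le_iff (P := P) hV hMV hq).2 h']
    have hsub : {ω | U ω + V ω ≤ x} ⊆ {ω | U ω ≤ a - ε} ∪ {ω | V ω ≤ b - ε} := by
      intro ω (hω : U ω + V ω ≤ x)
      by_contra! hc
      simp only [mem_union, mem_ofPred_eq, not_or, not_le] at hc
      linarith
    have hFx := le_measure_le_VaR (P := P) hW hMW hq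
    rcases h.sublevel_subset_or (a - ε) (b - ε) with hab | hba
    · rw [union_eq_right.2 hab] at hsub
      exact (hFx.trans (measureReal_mono hsub)).not_gt hFb
    · rw [union_eq_left.2 hba] at hsub
      exact (hFx.trans (measureReal_mono hsub)).not_gt hFa

end VaR

section ES

variable {Ω : Type*} [MeasurableSpace Ω] {P : Measure Ω} [IsProbabilityMeasure P]
  {Z U V : Ω → ℝ} {M N p : ℝ}

lemma uIcc_subset_Ioc_zero_one (hp : p ∈ Ioo 0 1) : uIcc p 1 ⊆ Ioc 0 1 := by
  rw [uIcc_of_le hp.2.le]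
  exact Icc_subset_Ioc hp.1 le_rfl

lemma intervalIntegrable_VaR (hZ : Measurable Z) (hM : ∀ ω, |Z ω| ≤ M) (hp : p ∈ Ioo 0 1) :
    IntervalIntegrable (VaR P Z) volume p 1 :=
  ((monotoneOn_VaR hZ hM).mono (uIcc_subset_Ioc_zero_one hp)).intervalIntegrable

lemma ES_const (hp : p ∈ Ioo 0 1) (c : ℝ) : ES P (fun _ => c) p = c := by
  have h : EqOn (VaR P fun _ => c) (fun _ => c) (uIcc p 1) := fun q hq =>
    VaR_const (uIcc_subset_Ioc_zero_one hp hq) c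
  rw [ES, intervalIntegral.integral_congr h, intervalIntegral.integral_const, smul_eq_mul,
    inv_mul_cancel_left₀ (sub_ne_zero.2 hp.2.ne')]

lemma Comonotonic.ES_add (h : Comonotonic U V) (hU : Measurable U) (hV : Measurable V)
    (hMU : ∀ ω, |U ω| ≤ M) (hMV : ∀ ω, |V ω| ≤ N) (hp : p ∈ Ioo 0 1) :
    ES P (fun ω => U ω + V ω) p = ES P U p + ES P V p := by
  have h' : EqOn (VaR P fun ω => U ω + V ω) (fun q => VaR P U q + VaR P V q) (uIcc p 1) :=
    fun q hq => h.VaR_add hU hV hMU hMV (uIcc_subset_Ioc_zero_one hp hq)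
  rw [ES, ES, ES, intervalIntegral.integral_congr h', intervalIntegral.integral_add
    (intervalIntegrable_VaR hU hMU hp) (intervalIntegrable_VaR hV hMV hp), mul_add]

lemma ES_add_const (hZ : Measurable Z) (hM : ∀ ω, |Z ω| ≤ M) (hp : p ∈ Ioo 0 1) (c : ℝ) :
    ES P (fun ω => Z ω + c) p = ES P Z p + c := by
  rw [(comonotonic_const_right Z c).ES_add hZ measurable_const hM (fun _ => le_refl |c|) hp,
    ES_const hp]

lemma ES_const_mul (hZ : Measurable Z) (hM : ∀ ω, |Z ω| ≤ M) (hp : p ∈ Ioo 0 1)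
    {l : ℝ} (hl : 0 < l) : ES P (fun ω => l * Z ω) p = l * ES P Z p := by
  have h : EqOn (VaR P fun ω => l * Z ω) (fun q => l * VaR P Z q) (uIcc p 1) := fun q hq =>
    VaR_const_mul hZ hM (uIcc_subset_Ioc_zero_one hp hq) hl
  rw [ES, ES, intervalIntegral.integral_congr h, intervalIntegral.integral_const_mul]
  ring

lemma ES_mono (hU : Measurable U) (hV : Measurable V) (hMU : ∀ ω, |U ω| ≤ M)
    (hMV : ∀ ω, |V ω| ≤ N) (hp : p ∈ Ioo 0 1) (h : ∀ ω, U ω ≤ V ω) :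
    ES P U p ≤ ES P V p := by
  refine mul_le_mul_of_nonneg_left ?_ (inv_nonneg.2 (sub_pos.2 hp.2).le)
  exact intervalIntegral.integral_mono_on hp.2.le (intervalIntegrable_VaR hU hMU hp)
    (intervalIntegrable_VaR hV hMV hp) fun q hq =>
      VaR_mono hU hV hMU hMV (uIcc_subset_Ioc_zero_one hp (Icc_subset_uIcc hq)) h

lemma integrable_sub_pos (hZ : Measurable Z) (hM : ∀ ω, |Z ω| ≤ M) (z : ℝ) :
    Integrable (fun ω => max (Z ω - z) 0) P := by
  refine .of_bound (by fun_prop) (M + |z|) (ae_of_all _ fun ω => ?_)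
  rw [Real.norm_of_nonneg (le_max_right _ _)]
  exact max_le (by linarith [(abs_le.1 (hM ω)).2, neg_abs_le z])
    (by linarith [(abs_nonneg (Z ω)).trans (hM ω), abs_nonneg z])

lemma monotoneOn_VaR_sub_pos (hZ : Measurable Z) (hM : ∀ ω, |Z ω| ≤ M) (hp : p ∈ Ioo 0 1)
    (z : ℝ) : MonotoneOn (fun q => max (VaR P Z q - z) 0) (uIcc p 1) :=
  fun _ hq _ hq' hqq' => max_le_max_right 0 <| sub_le_sub_right
    (monotoneOn_VaR hZ hM (uIcc_subset_Ioc_zero_one hp hq) (uIcc_subset_Ioc_zero_one hp hq') hqq') z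

lemma aestronglyMeasurable_VaR_sub_pos (hZ : Measurable Z) (hM : ∀ ω, |Z ω| ≤ M)
    (hp : p ∈ Ioo 0 1) (z : ℝ) :
    AEStronglyMeasurable (fun q => max (VaR P Z q - z) 0) (volume.restrict (Ioc p 1)) :=
  (aemeasurable_restrict_of_monotoneOn measurableSet_Ioc ((monotoneOn_VaR_sub_pos hZ hM hp z).mono
    (Ioc_subset_Icc_self.trans Icc_subset_uIcc))).aestronglyMeasurable

lemma lintegral_VaR_sub_pos (hZ : Measurable Z) (hM : ∀ ω, |Z ω| ≤ M) (hp : p ∈ Ioo 0 1)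
    (z : ℝ) :
    ∫⁻ q in Ioc p 1, ENNReal.ofReal (max (VaR P Z q - z) 0) =
      ∫⁻ t in Ioi 0, ENNReal.ofReal (1 - max p (P {ω | Z ω ≤ z + t}).toReal) := by
  rw [lintegral_eq_lintegral_meas_lt _ (f := fun q => max (VaR P Z q - z) 0)
    (ae_of_all _ fun _ => le_max_right _ _)
    (aestronglyMeasurable_VaR_sub_pos hZ hM hp z).aemeasurable]
  refine setLIntegral_congr_fun measurableSet_Ioi fun t (ht : 0 < t) => ?_
  have key : ∀ q ∈ Ioc p 1,
      t < max (VaR P Z q - z) 0 ↔ (P {ω | Z ω ≤ z + t}).toReal < q := fun q hq => by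
    rw [lt_max_iff, or_iff_left ht.not_gt, lt_sub_iff_add_lt', ← not_le, ← not_le,
      VaR_le_iff hZ hM (Ioc_subset_Ioc_left hp.1.le hq)]
  have hset : {q | t < max (VaR P Z q - z) 0} ∩ Ioc p 1 =
      Ioc (max p (P {ω | Z ω ≤ z + t}).toReal) 1 := by
    ext q
    simp only [mem_inter_iff, mem_ofPred_eq, mem_Ioc, max_lt_iff]
    constructor
    · rintro ⟨h, hpq, hq1⟩
      exact ⟨⟨hpq, (key q ⟨hpq, hq1⟩).1 h⟩, hq1⟩
    · rintro ⟨⟨hpq, h⟩, hq1⟩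
      exact ⟨(key q ⟨hpq, hq1⟩).2 h, hpq, hq1⟩
  rw [Measure.restrict_apply' measurableSet_Ioc, hset, Real.volume_Ioc]

lemma lintegral_sub_pos (hZ : Measurable Z) (z : ℝ) :
    ∫⁻ ω, ENNReal.ofReal (max (Z ω - z) 0) ∂P =
      ∫⁻ t in Ioi 0, ENNReal.ofReal (1 - (P {ω | Z ω ≤ z + t}).toReal) := by
  rw [lintegral_eq_lintegral_meas_lt _ (f := fun ω => max (Z ω - z) 0)
    (ae_of_all _ fun _ => le_max_right _ _) (by fun_prop)]
  refine setLIntegral_congr_fun measurableSet_Ioi fun t (ht : 0 < t) => ?_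
  have hset : {ω | t < max (Z ω - z) 0} = {ω | Z ω ≤ z + t}ᶜ := by
    ext ω
    rw [mem_ofPred_eq, lt_max_iff, or_iff_left ht.not_gt, mem_compl_iff, mem_ofPred_eq, not_le,
      lt_sub_iff_add_lt']
  rw [hset, prob_compl_eq_one_sub (measurableSet_le hZ measurable_const),
    ENNReal.ofReal_sub _ ENNReal.toReal_nonneg,
    ENNReal.ofReal_one, ENNReal.ofReal_toReal (measure_ne_top _ _)]

lemma intervalIntegral_VaR_sub_pos_le (hZ : Measurable Z) (hM : ∀ ω, |Z ω| ≤ M)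
    (hp : p ∈ Ioo 0 1) (z : ℝ) :
    ∫ q in p..1, max (VaR P Z q - z) 0 ≤ ∫ ω, max (Z ω - z) 0 ∂P := by
  have h : ∫⁻ q in Ioc p 1, ENNReal.ofReal (max (VaR P Z q - z) 0) ≤
      ∫⁻ ω, ENNReal.ofReal (max (Z ω - z) 0) ∂P := by
    rw [lintegral_VaR_sub_pos hZ hM hp, lintegral_sub_pos hZ]
    exact lintegral_mono fun t => ENNReal.ofReal_le_ofReal <|
      sub_le_sub_left (le_max_right p (P {ω | Z ω ≤ z + t}).toReal) 1
  rw [intervalIntegral.integral_of_le hp.2.le,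
    integral_eq_lintegral_of_nonneg_ae (f := fun q => max (VaR P Z q - z) 0)
      (ae_of_all _ fun _ => le_max_right _ _) (aestronglyMeasurable_VaR_sub_pos hZ hM hp z),
    integral_eq_lintegral_of_nonneg_ae (f := fun ω => max (Z ω - z) 0)
      (ae_of_all _ fun _ => le_max_right _ _) (by fun_prop)]
  exact ENNReal.toReal_mono (integrable_sub_pos hZ hM z).lintegral_lt_top.ne h

lemma intervalIntegral_VaR_sub_pos_eq (hZ : Measurable Z) (hM : ∀ ω, |Z ω| ≤ M)
    (hp : p ∈ Ioo 0 1) {z : ℝ} (hz : VaR P Z p ≤ z) :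
    ∫ q in p..1, max (VaR P Z q - z) 0 = ∫ ω, max (Z ω - z) 0 ∂P := by
  have h : ∫⁻ q in Ioc p 1, ENNReal.ofReal (max (VaR P Z q - z) 0) =
      ∫⁻ ω, ENNReal.ofReal (max (Z ω - z) 0) ∂P := by
    rw [lintegral_VaR_sub_pos hZ hM hp, lintegral_sub_pos hZ]
    refine setLIntegral_congr_fun measurableSet_Ioi fun t (ht : 0 < t) => ?_
    rw [max_eq_right ((VaR_le_iff hZ hM ⟨hp.1, hp.2.le⟩).1 (by linarith))]
  rw [intervalIntegral.integral_of_le hp.2.le,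
    integral_eq_lintegral_of_nonneg_ae (f := fun q => max (VaR P Z q - z) 0)
      (ae_of_all _ fun _ => le_max_right _ _) (aestronglyMeasurable_VaR_sub_pos hZ hM hp z),
    integral_eq_lintegral_of_nonneg_ae (f := fun ω => max (Z ω - z) 0)
      (ae_of_all _ fun _ => le_max_right _ _) (by fun_prop), h]

lemma ES_eq_add_intervalIntegral_sub (hZ : Measurable Z) (hM : ∀ ω, |Z ω| ≤ M)
    (hp : p ∈ Ioo 0 1) (z : ℝ) :
    ES P Z p = z + (1 - p)⁻¹ * ∫ q in p..1, (VaR P Z q - z) := by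
  rw [ES, intervalIntegral.integral_sub (intervalIntegrable_VaR hZ hM hp) intervalIntegrable_const,
    intervalIntegral.integral_const, smul_eq_mul, mul_sub, inv_mul_cancel_left₀
      (sub_ne_zero.2 hp.2.ne')]
  ring

lemma ES_le_add_integral_sub_pos (hZ : Measurable Z) (hM : ∀ ω, |Z ω| ≤ M)
    (hp : p ∈ Ioo 0 1) (z : ℝ) :
    ES P Z p ≤ z + (1 - p)⁻¹ * ∫ ω, max (Z ω - z) 0 ∂P := by
  rw [ES_eq_add_intervalIntegral_sub hZ hM hp z]
  refine (add_le_add_iff_left z).2 (mul_le_mul_of_nonneg_left ?_ (inv_nonneg.2 (sub_pos.2 hp.2).le))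
  refine le_trans ?_ (intervalIntegral_VaR_sub_pos_le hZ hM hp z)
  exact intervalIntegral.integral_mono_on hp.2.le
    ((intervalIntegrable_VaR hZ hM hp).sub intervalIntegrable_const)
    (monotoneOn_VaR_sub_pos hZ hM hp z).intervalIntegrable
    fun q _ => le_max_left _ _

lemma ES_eq_VaR_add_integral_sub_pos (hZ : Measurable Z) (hM : ∀ ω, |Z ω| ≤ M)
    (hp : p ∈ Ioo 0 1) :
    ES P Z p = VaR P Z p + (1 - p)⁻¹ * ∫ ω, max (Z ω - VaR P Z p) 0 ∂P := by
  have h : EqOn (fun q => VaR P Z q - VaR P Z p) (fun q => max (VaR P Z q - VaR P Z p) 0)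
      (uIcc p 1) := fun q hq => by
    rw [uIcc_of_le hp.2.le] at hq
    refine (max_eq_left (sub_nonneg.2 (monotoneOn_VaR hZ hM ?_ ?_ hq.1))).symm
    · exact ⟨hp.1, hp.2.le⟩
    · exact ⟨hp.1.trans_le hq.1, hq.2⟩
  rw [ES_eq_add_intervalIntegral_sub hZ hM hp (VaR P Z p), intervalIntegral.integral_congr h,
    intervalIntegral_VaR_sub_pos_eq hZ hM hp le_rfl]

lemma ES_add_le (hU : Measurable U) (hV : Measurable V) (hMU : ∀ ω, |U ω| ≤ M)
    (hMV : ∀ ω, |V ω| ≤ N) (hp : p ∈ Ioo 0 1) :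
    ES P (fun ω => U ω + V ω) p ≤ ES P U p + ES P V p := by
  set a := VaR P U p
  set b := VaR P V p
  have hMW := forall_abs_add_le hMU hMV
  have hint : ∫ ω, max (U ω + V ω - (a + b)) 0 ∂P ≤
      ∫ ω, max (U ω - a) 0 ∂P + ∫ ω, max (V ω - b) 0 ∂P := by
    rw [← integral_add (integrable_sub_pos hU hMU a) (integrable_sub_pos hV hMV b)]
    refine integral_mono (integrable_sub_pos (hU.add hV) hMW _)
      ((integrable_sub_pos hU hMU a).add (integrable_sub_pos hV hMV b)) fun ω => ?_
    exact max_le (by linarith [le_max_left (U ω - a) 0, le_max_left (V ω - b) 0])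
      (by positivity)
  calc ES P (fun ω => U ω + V ω) p
      ≤ a + b + (1 - p)⁻¹ * ∫ ω, max (U ω + V ω - (a + b)) 0 ∂P :=
        ES_le_add_integral_sub_pos (hU.add hV) hMW hp (a + b)
    _ ≤ a + b + (1 - p)⁻¹ * (∫ ω, max (U ω - a) 0 ∂P + ∫ ω, max (V ω - b) 0 ∂P) :=
        (add_le_add_iff_left _).2
          (mul_le_mul_of_nonneg_left hint (inv_nonneg.2 (sub_pos.2 hp.2).le))
    _ = ES P U p + ES P V p := by
        rw [ES_eq_VaR_add_integral_sub_pos hU hMU hp, ES_eq_VaR_add_integral_sub_pos hV hMV hp]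
        ring

end ES

section FiniteMax

variable {ι : Type*} [Finite ι] [Nonempty ι] {g h : ι → ℝ}

lemma Comonotonic.exists_eq_ciSup (hgh : Comonotonic g h) :
    ∃ k, g k = ⨆ i, g i ∧ h k = ⨆ i, h i := by
  obtain ⟨i, hi⟩ := exists_eq_ciSup_of_finite (f := g)
  obtain ⟨j, hj⟩ := exists_eq_ciSup_of_finite (f := h)
  have hgj : g j ≤ g i := hi ▸ le_ciSup (Finite.bddAbove_range g) j
  have hhi : h i ≤ h j := hj ▸ le_ciSup (Finite.bddAbove_range h) i
  rcases hgj.eq_or_lt with hg | hg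
  · exact ⟨j, hg.trans hi, hj⟩
  · have hhj : h j ≤ h i := sub_nonneg.1 (nonneg_of_mul_nonneg_right (hgh i j) (sub_pos.2 hg))
    exact ⟨i, hi, (le_antisymm hhi hhj).trans hj⟩

lemma Comonotonic.ciSup_add (hgh : Comonotonic g h) :
    ⨆ i, (g i + h i) = (⨆ i, g i) + ⨆ i, h i := by
  obtain ⟨k, hgk, hhk⟩ := hgh.exists_eq_ciSup
  exact (ciSup_add_le_ciSup_add_ciSup (Finite.bddAbove_range g) (Finite.bddAbove_range h)).antisymm
    (hgk ▸ hhk ▸ le_ciSup (Finite.bddAbove_range fun i => g i + h i) k)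

lemma ciSup_add_const (g : ι → ℝ) (c : ℝ) : ⨆ i, (g i + c) = (⨆ i, g i) + c := by
  rw [(comonotonic_const_right g c).ciSup_add, ciSup_const]

variable {Ω : Type*} {X Y : Ω → ℝ} {M : ℝ}

lemma abs_ciSup_comp_le (hM : ∀ ω, |X ω| ≤ M) (ω : ι → Ω) : |⨆ i, X (ω i)| ≤ M := by
  obtain ⟨i, hi⟩ := exists_eq_ciSup_of_finite (f := fun i => X (ω i))
  exact hi ▸ hM (ω i)

lemma Comonotonic.ciSup_comp (h : Comonotonic X Y) :
    Comonotonic (fun ω : ι → Ω => ⨆ i, X (ω i)) (fun ω => ⨆ i, Y (ω i)) := by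
  intro ω ω'
  obtain ⟨k, hXk, hYk⟩ := Comonotonic.exists_eq_ciSup fun i j => h (ω i) (ω j)
  obtain ⟨k', hXk', hYk'⟩ := Comonotonic.exists_eq_ciSup fun i j => h (ω' i) (ω' j)
  dsimp only
  rw [← hXk, ← hYk, ← hXk', ← hYk']
  exact h (ω k) (ω' k')

end FiniteMax

section rMES

variable {Ω : Type*} [MeasurableSpace Ω] {n : ℕ} [NeZero n] {Q : Fin n → Measure Ω}
  [∀ i, IsProbabilityMeasure (Q i)] {X Y : Ω → ℝ} {M N p : ℝ}

lemma rMES_add_const (hX : Measurable X) (hM : ∀ ω, |X ω| ≤ M) (hp : p ∈ Ioo 0 1) (c : ℝ) :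
    rMES Q (fun ω => X ω + c) p = rMES Q X p + c := by
  simp only [rMES, ciSup_add_const]
  exact ES_add_const (by fun_prop) (abs_ciSup_comp_le hM) hp c

lemma rMES_mono (hX : Measurable X) (hY : Measurable Y) (hM : ∀ ω, |X ω| ≤ M)
    (hN : ∀ ω, |Y ω| ≤ N) (hp : p ∈ Ioo 0 1) (h : ∀ ω, X ω ≤ Y ω) :
    rMES Q X p ≤ rMES Q Y p :=
  ES_mono (by fun_prop) (by fun_prop) (abs_ciSup_comp_le hM) (abs_ciSup_comp_le hN) hp
    fun ω => ciSup_mono (Finite.bddAbove_range _) fun i => h (ω i)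

lemma rMES_const_mul (hX : Measurable X) (hM : ∀ ω, |X ω| ≤ M) (hp : p ∈ Ioo 0 1)
    {l : ℝ} (hl : 0 < l) : rMES Q (fun ω => l * X ω) p = l * rMES Q X p := by
  simp only [rMES, ← Real.mul_iSup_of_nonneg hl.le]
  exact ES_const_mul (by fun_prop) (abs_ciSup_comp_le hM) hp hl

lemma rMES_add_le (hX : Measurable X) (hY : Measurable Y) (hM : ∀ ω, |X ω| ≤ M)
    (hN : ∀ ω, |Y ω| ≤ N) (hp : p ∈ Ioo 0 1) :
    rMES Q (fun ω => X ω + Y ω) p ≤ rMES Q X p + rMES Q Y p := by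
  refine (ES_mono (by fun_prop) (by fun_prop) (abs_ciSup_comp_le (forall_abs_add_le hM hN))
    (forall_abs_add_le (abs_ciSup_comp_le hM) (abs_ciSup_comp_le hN)) hp fun ω =>
      ciSup_add_le_ciSup_add_ciSup (Finite.bddAbove_range _) (Finite.bddAbove_range _)).trans ?_
  exact ES_add_le (by fun_prop) (by fun_prop) (abs_ciSup_comp_le hM) (abs_ciSup_comp_le hN) hp

lemma Comonotonic.rMES_add (h : Comonotonic X Y) (hX : Measurable X) (hY : Measurable Y)
    (hM : ∀ ω, |X ω| ≤ M) (hN : ∀ ω, |Y ω| ≤ N) (hp : p ∈ Ioo 0 1) :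
    rMES Q (fun ω => X ω + Y ω) p = rMES Q X p + rMES Q Y p := by
  simp only [rMES, fun ω : Fin n → Ω => Comonotonic.ciSup_add fun i j => h (ω i) (ω j)]
  exact h.ciSup_comp.ES_add (by fun_prop) (by fun_prop) (abs_ciSup_comp_le hM)
    (abs_ciSup_comp_le hN) hp

end rMES

theorem rmes_coherent_comonotonic_additive_general {Ω : Type*} [MeasurableSpace Ω]
    (n : ℕ) (hn : 0 < n) (Q : Fin n → Measure Ω)
    (hprob : ∀ i, IsProbabilityMeasure (Q i))
    (p : ℝ) (hp : p ∈ Set.Ioo (0 : ℝ) 1) :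
    (∀ X : Ω → ℝ, Measurable X → BddRV X → ∀ c : ℝ,
        rMES Q (fun ω => X ω + c) p = rMES Q X p + c) ∧
    (∀ X Y : Ω → ℝ, Measurable X → Measurable Y → BddRV X → BddRV Y →
        (∀ ω, X ω ≤ Y ω) → rMES Q X p ≤ rMES Q Y p) ∧
    (∀ X : Ω → ℝ, Measurable X → BddRV X → ∀ l : ℝ, 0 < l →
        rMES Q (fun ω => l * X ω) p = l * rMES Q X p) ∧
    (∀ X Y : Ω → ℝ, Measurable X → Measurable Y → BddRV X → BddRV Y →
        rMES Q (fun ω => X ω + Y ω) p ≤ rMES Q X p + rMES Q Y p) ∧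
    (∀ X Y : Ω → ℝ, Measurable X → Measurable Y → BddRV X → BddRV Y →
        Comonotonic X Y →
        rMES Q (fun ω => X ω + Y ω) p = rMES Q X p + rMES Q Y p) := by
  have : NeZero n := ⟨hn.ne'⟩
  exact ⟨fun X hX ⟨M, hM⟩ c => rMES_add_const hX hM hp c,
    fun X Y hX hY ⟨M, hM⟩ ⟨N, hN⟩ h => rMES_mono hX hY hM hN hp h,
    fun X hX ⟨M, hM⟩ l hl => rMES_const_mul hX hM hp hl,
    fun X Y hX hY ⟨M, hM⟩ ⟨N, hN⟩ => rMES_add_le hX hY hM hN hp,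
    fun X Y hX hY ⟨M, hM⟩ ⟨N, hN⟩ h => h.rMES_add hX hY hM hN hp⟩

theorem rmes_coherent_comonotonic_additive {Ω : Type*} [MeasurableSpace Ω]
    (n : ℕ) (hn : 0 < n) (Q : Fin n → Measure Ω)
    (hprob : ∀ i, IsProbabilityMeasure (Q i))
    (hdist : ∀ i j, i ≠ j → Q i ≠ Q j)
    (p : ℝ) (hp : p ∈ Set.Ioo (0 : ℝ) 1) :
    (∀ X : Ω → ℝ, Measurable X → BddRV X → ∀ c : ℝ,
        rMES Q (fun ω => X ω + c) p = rMES Q X p + c) ∧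
    (∀ X Y : Ω → ℝ, Measurable X → Measurable Y → BddRV X → BddRV Y →
        (∀ ω, X ω ≤ Y ω) → rMES Q X p ≤ rMES Q Y p) ∧
    (∀ X : Ω → ℝ, Measurable X → BddRV X → ∀ l : ℝ, 0 < l →
        rMES Q (fun ω => l * X ω) p = l * rMES Q X p) ∧
    (∀ X Y : Ω → ℝ, Measurable X → Measurable Y → BddRV X → BddRV Y →
        rMES Q (fun ω => X ω + Y ω) p ≤ rMES Q X p + rMES Q Y p) ∧
    (∀ X Y : Ω → ℝ, Measurable X → Measurable Y → BddRV X → BddRV Y →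
        Comonotonic X Y →
        rMES Q (fun ω => X ω + Y ω) p = rMES Q X p + rMES Q Y p) :=
  rmes_coherent_comonotonic_additive_general n hn Q hprob p hp
end

section
/- Let ℙ be a convex combination of probability measures Q_1,...,Q_m. Then for every bounded random variable X and p ∈ (0,1), the integrated Max-ES satisfies iMES_p^Q(X) = (1/(1-p)) ∫_p^1 max_i VaR_q^{Q_i}(X) dq ≥ ES_p^ℙ(X). -/
open MeasureTheory Set

section aux

variable {Ω : Type*} [MeasurableSpace Ω] (Q : Measure Ω) (X : Ω → ℝ)

lemma aux_upward [IsFiniteMeasure Q] {q x y : ℝ}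
    (hx : q ≤ (Q {ω | X ω ≤ x}).toReal) (hxy : x ≤ y) :
    q ≤ (Q {ω | X ω ≤ y}).toReal := by
  refine hx.trans (ENNReal.toReal_mono (measure_ne_top _ _) (measure_mono ?_))
  intro ω hω; exact le_trans hω hxy

lemma aux_mem [IsProbabilityMeasure Q] {q M : ℝ} (hq : q ≤ 1) (hM : ∀ ω, |X ω| ≤ M) :
    M ∈ {x : ℝ | q ≤ (Q {ω | X ω ≤ x}).toReal} := by
  have h : {ω | X ω ≤ M} = Set.univ := by
    ext ω; simp [le_trans (le_abs_self _) (hM ω)]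
  simp [Set.mem_setOf_eq, h, hq]

lemma aux_bddBelow {q M : ℝ} (hq : 0 < q) (hM : ∀ ω, |X ω| ≤ M) :
    BddBelow {x : ℝ | q ≤ (Q {ω | X ω ≤ x}).toReal} := by
  refine ⟨-M, fun x hx => ?_⟩
  by_contra h
  push_neg at h
  have he : {ω | X ω ≤ x} = (∅ : Set Ω) := by
    ext ω
    simp only [Set.mem_setOf_eq, Set.mem_empty_iff_false, iff_false, not_le]
    exact lt_of_lt_of_le h (neg_le_of_abs_le (hM ω))
  rw [Set.mem_setOf_eq, he] at hx
  simp at hx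
  exact absurd hx (not_le.mpr hq)

lemma VaR_mono_s7 [IsProbabilityMeasure Q] {M : ℝ} (hM : ∀ ω, |X ω| ≤ M) {q q' : ℝ}
    (hq : 0 < q) (hqq' : q ≤ q') (hq' : q' ≤ 1) : VaR Q X q ≤ VaR Q X q' := by
  refine csInf_le_csInf (aux_bddBelow Q X hq hM) ⟨M, aux_mem Q X hq' hM⟩ ?_
  intro x hx
  exact le_trans hqq' hx

end aux

theorem imes_ge_es_of_convex_combination {Ω : Type*} [MeasurableSpace Ω]
    (m : ℕ) (hm : 0 < m) (Q : Fin m → Measure Ω)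
    (hprob : ∀ i, IsProbabilityMeasure (Q i))
    (P : Measure Ω) (w : Fin m → NNReal) (hw : ∑ i, w i = 1)
    (hP : P = Measure.sum (fun i => (w i : ENNReal) • Q i))
    (X : Ω → ℝ) (hX : Measurable X) (hXb : ∃ M, ∀ ω, |X ω| ≤ M)
    (p : ℝ) (hp : p ∈ Set.Ioo (0 : ℝ) 1) :
    ES P X p ≤ (1 - p)⁻¹ * ∫ q in p..1, ⨆ i, VaR (Q i) X q := by
  obtain ⟨M, hM⟩ := hXb
  haveI : ∀ i, IsProbabilityMeasure (Q i) := hprob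
  haveI hne : Nonempty (Fin m) := ⟨⟨0, hm⟩⟩
  -- P is a probability measure
  haveI hPprob : IsProbabilityMeasure P := by
    constructor
    rw [hP, Measure.sum_apply _ MeasurableSet.univ]
    simp only [Measure.smul_apply, smul_eq_mul, measure_univ, mul_one]
    rw [tsum_fintype]
    rw [← ENNReal.coe_finset_sum, hw, ENNReal.coe_one]
  -- key pointwise inequality
  have key : ∀ q : ℝ, 0 < q → q ≤ 1 → VaR P X q ≤ ⨆ i, VaR (Q i) X q := by
    intro q hq0 hq1
    have hbdd : BddAbove (Set.range fun i => VaR (Q i) X q) :=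
      (Set.finite_range _).bddAbove
    refine le_of_forall_pos_le_add (fun ε hε => ?_)
    set y := (⨆ i, VaR (Q i) X q) + ε with hy
    -- y belongs to each S_i
    have hyi : ∀ i, q ≤ ((Q i) {ω | X ω ≤ y}).toReal := by
      intro i
      have h1 : VaR (Q i) X q < y := by
        have := le_ciSup hbdd i
        simp only [hy]; linarith
      obtain ⟨s, hs, hsy⟩ := exists_lt_of_csInf_lt ⟨M, aux_mem (Q i) X hq1 hM⟩ h1
      exact aux_upward (Q i) X hs hsy.le
    -- hence y ∈ S_P
    have hyP : q ≤ (P {ω | X ω ≤ y}).toReal := by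
      have hms : MeasurableSet {ω | X ω ≤ y} := hX measurableSet_Iic
      rw [hP, Measure.sum_apply _ hms, tsum_fintype]
      have htr : (∑ i, ((w i : ENNReal) • Q i) {ω | X ω ≤ y}).toReal
          = ∑ i, (w i : ℝ) * ((Q i) {ω | X ω ≤ y}).toReal := by
        rw [ENNReal.toReal_sum]
        · refine Finset.sum_congr rfl (fun i _ => ?_)
          simp [ENNReal.toReal_mul]
        · intro i _
          exact ENNReal.mul_ne_top ENNReal.coe_ne_top (measure_ne_top _ _)
      rw [htr]
      have hsum1 : ∑ i, (w i : ℝ) = 1 := by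
        rw [← NNReal.coe_sum, hw, NNReal.coe_one]
      calc q = ∑ i, (w i : ℝ) * q := by rw [← Finset.sum_mul, hsum1, one_mul]
        _ ≤ ∑ i, (w i : ℝ) * ((Q i) {ω | X ω ≤ y}).toReal := by
            refine Finset.sum_le_sum (fun i _ => ?_)
            exact mul_le_mul_of_nonneg_left (hyi i) (w i).coe_nonneg
    exact csInf_le (aux_bddBelow P X hq0 hM) hyP
  -- integrability
  have hple : p ≤ 1 := hp.2.le
  have hmonoP : MonotoneOn (fun q => VaR P X q) (Set.uIcc p 1) := by
    rw [Set.uIcc_of_le hple]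
    intro a ha b hb hab
    exact VaR_mono_s7 P X hM (hp.1.trans_le ha.1) hab hb.2
  have hmonoS : MonotoneOn (fun q => ⨆ i, VaR (Q i) X q) (Set.uIcc p 1) := by
    rw [Set.uIcc_of_le hple]
    intro a ha b hb hab
    exact ciSup_mono ((Set.finite_range _).bddAbove) fun i =>
      VaR_mono_s7 (Q i) X hM (hp.1.trans_le ha.1) hab hb.2
  have hintP : IntervalIntegrable (fun q => VaR P X q) volume p 1 :=
    hmonoP.intervalIntegrable
  have hintS : IntervalIntegrable (fun q => ⨆ i, VaR (Q i) X q) volume p 1 :=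
    hmonoS.intervalIntegrable
  have hint : (∫ q in p..1, VaR P X q) ≤ ∫ q in p..1, ⨆ i, VaR (Q i) X q := by
    refine intervalIntegral.integral_mono_on hple hintP hintS (fun q hq => ?_)
    exact key q (hp.1.trans_le hq.1) hq.2
  have hpos : (0:ℝ) ≤ (1 - p)⁻¹ := by
    have : 0 < 1 - p := by linarith [hp.2]
    positivity
  unfold ES
  exact mul_le_mul_of_nonneg_left hint hpos
end

section
/- There exist a finite probability space (Ω, F, ℙ), an event-partition generating conditional measures Q1, Q2, a level p ∈ (0,1), and a random variable X such that max{ES_p^{Q1}(X), ES_p^{Q2}(X)} < ES_p^ℙ(X). In particular, Max-ES over conditional scenarios need not dominate the unconditional ES. -/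
open MeasureTheory Set ProbabilityTheory

namespace MaxESCounter

noncomputable def Pm : Measure (Fin 3) :=
  ENNReal.ofReal (2/5) • Measure.dirac 0 + ENNReal.ofReal (1/10) • Measure.dirac 1 +
    ENNReal.ofReal (1/2) • Measure.dirac 2

noncomputable def Xf : Fin 3 → ℝ := ![0, 2, 1]

open scoped Classical in
lemma Pm_apply (s : Set (Fin 3)) :
    Pm s = (if 0 ∈ s then ENNReal.ofReal (2/5) else 0) +
      ((if 1 ∈ s then ENNReal.ofReal (1/10) else 0) +
        (if 2 ∈ s then ENNReal.ofReal (1/2) else 0)) := by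
  simp [Pm, Measure.dirac_apply, Set.indicator_apply, mul_ite, add_assoc]

instance : IsProbabilityMeasure Pm := by
  constructor
  rw [Pm_apply]
  simp only [Set.mem_univ, if_true]
  rw [← ENNReal.ofReal_add (by norm_num) (by norm_num),
    ← ENNReal.ofReal_add (by norm_num) (by norm_num)]
  norm_num

lemma Pm_A : Pm {0, 1} = ENNReal.ofReal (1/2) := by
  rw [Pm_apply, if_pos (by decide), if_pos (by decide), if_neg (by decide)]
  rw [add_zero, ← ENNReal.ofReal_add (by norm_num) (by norm_num)]
  norm_num

lemma compl_A : ({0, 1} : Set (Fin 3))ᶜ = {2} := by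
  ext x; fin_cases x <;> simp

lemma Pm_two : Pm {2} = ENNReal.ofReal (1/2) := by
  rw [Pm_apply, if_neg (by decide), if_neg (by decide), if_pos (by decide)]
  simp

noncomputable def Q1 : Measure (Fin 3) := Pm[|{0, 1}]
noncomputable def Q2 : Measure (Fin 3) := Pm[|({0, 1} : Set (Fin 3))ᶜ]

lemma meas_A : MeasurableSet ({0, 1} : Set (Fin 3)) := MeasurableSet.of_discrete

lemma Q1_apply (t : Set (Fin 3)) : Q1 t = ENNReal.ofReal 2 * Pm ({0, 1} ∩ t) := by
  rw [Q1, cond_apply meas_A Pm t, Pm_A,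
    ← ENNReal.ofReal_inv_of_pos (by norm_num)]
  norm_num

lemma Q2_apply (t : Set (Fin 3)) : Q2 t = ENNReal.ofReal 2 * Pm ({2} ∩ t) := by
  rw [Q2, cond_apply meas_A.compl Pm t, compl_A, Pm_two,
    ← ENNReal.ofReal_inv_of_pos (by norm_num)]
  norm_num

instance : IsProbabilityMeasure Q1 := by
  rw [Q1]
  exact cond_isProbabilityMeasure (by rw [Pm_A]; positivity)

instance : IsProbabilityMeasure Q2 := by
  rw [Q2]
  refine cond_isProbabilityMeasure ?_
  rw [compl_A, Pm_two]; positivity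

lemma toReal_mono_meas {Q : Measure (Fin 3)} [IsFiniteMeasure Q] {s t : Set (Fin 3)}
    (h : s ⊆ t) : (Q s).toReal ≤ (Q t).toReal :=
  ENNReal.toReal_mono (measure_ne_top Q t) (measure_mono h)

/- level sets of Xf -/
lemma lev_sub_zero {x : ℝ} (hx : x < 0) : {ω | Xf ω ≤ x} ⊆ (∅ : Set (Fin 3)) := by
  intro ω hω; fin_cases ω <;> simp [Xf] at hω <;> linarith

lemma lev_sub_one {x : ℝ} (hx : x < 1) : {ω | Xf ω ≤ x} ⊆ ({0} : Set (Fin 3)) := by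
  intro ω hω; fin_cases ω <;> simp [Xf] at hω ⊢ <;> linarith

lemma lev_sub_two {x : ℝ} (hx : x < 2) : {ω | Xf ω ≤ x} ⊆ ({0, 2} : Set (Fin 3)) := by
  intro ω hω; fin_cases ω <;> simp [Xf] at hω ⊢ <;> linarith

lemma lev_sup_zero {x : ℝ} (hx : (0:ℝ) ≤ x) : ({0} : Set (Fin 3)) ⊆ {ω | Xf ω ≤ x} := by
  intro ω hω; simp at hω; subst hω; simpa [Xf]

lemma lev_sup_one {x : ℝ} (hx : (1:ℝ) ≤ x) : ({0, 2} : Set (Fin 3)) ⊆ {ω | Xf ω ≤ x} := by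
  intro ω hω; simp at hω
  rcases hω with h | h <;> subst h <;> simp [Xf] <;> linarith

lemma lev_sup_two {x : ℝ} (hx : (1:ℝ) ≤ x) : ({2} : Set (Fin 3)) ⊆ {ω | Xf ω ≤ x} := by
  intro ω hω; simp at hω; subst hω; simpa [Xf]

lemma lev_univ {x : ℝ} (hx : (2:ℝ) ≤ x) : {ω | Xf ω ≤ x} = univ := by
  ext ω; simp only [mem_setOf_eq, mem_univ, iff_true]
  fin_cases ω <;> simp [Xf] <;> linarith

/- generic VaR computation -/
lemma VaR_eq {Ω : Type*} [MeasurableSpace Ω] {Q : Measure Ω} {X : Ω → ℝ} {q c : ℝ}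
    (h1 : ∀ x, c ≤ x → q ≤ (Q {ω | X ω ≤ x}).toReal)
    (h2 : ∀ x, x < c → (Q {ω | X ω ≤ x}).toReal < q) :
    VaR Q X q = c := by
  have hset : {x : ℝ | q ≤ (Q {ω | X ω ≤ x}).toReal} = Ici c := by
    ext x
    simp only [mem_setOf_eq, mem_Ici]
    constructor
    · intro h
      by_contra hc
      exact absurd h (not_le.2 (h2 x (not_le.1 hc)))
    · exact h1 x
  rw [VaR, hset, csInf_Ici]

/- concrete measure values -/
lemma Pm_zero_toReal : (Pm {0}).toReal = 2/5 := by
  rw [Pm_apply, if_pos (by decide), if_neg (by decide), if_neg (by decide)]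
  simp
  norm_num

lemma Pm_02_toReal : (Pm {0, 2}).toReal = 9/10 := by
  rw [Pm_apply, if_pos (by decide), if_neg (by decide), if_pos (by decide)]
  rw [zero_add, ← ENNReal.ofReal_add (by norm_num) (by norm_num)]
  rw [ENNReal.toReal_ofReal (by norm_num)]
  norm_num

lemma Q1_zero_toReal : (Q1 {0}).toReal = 4/5 := by
  have : ({0, 1} : Set (Fin 3)) ∩ {0} = {0} := by ext x; fin_cases x <;> simp
  rw [Q1_apply, this, Pm_apply, if_pos (by decide), if_neg (by decide), if_neg (by decide)]
  rw [add_zero, add_zero, ← ENNReal.ofReal_mul (by norm_num)]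
  rw [ENNReal.toReal_ofReal (by norm_num)]
  norm_num

lemma Q1_02_toReal : (Q1 {0, 2}).toReal = 4/5 := by
  have : ({0, 1} : Set (Fin 3)) ∩ {0, 2} = {0} := by ext x; fin_cases x <;> simp
  rw [Q1_apply, this, Pm_apply, if_pos (by decide), if_neg (by decide), if_neg (by decide)]
  rw [add_zero, add_zero, ← ENNReal.ofReal_mul (by norm_num)]
  rw [ENNReal.toReal_ofReal (by norm_num)]
  norm_num

lemma Q2_zero_toReal : (Q2 {0}).toReal = 0 := by
  have : ({2} : Set (Fin 3)) ∩ {0} = ∅ := by ext x; fin_cases x <;> simp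
  rw [Q2_apply, this]
  simp

lemma Q2_two_toReal : (Q2 {2}).toReal = 1 := by
  have : ({2} : Set (Fin 3)) ∩ {2} = {2} := by simp
  rw [Q2_apply, this, Pm_two, ← ENNReal.ofReal_mul (by norm_num)]
  norm_num

/- VaR regime lemmas -/
lemma VaR_P_mid {q : ℝ} (hq1 : 2/5 < q) (hq2 : q ≤ 9/10) : VaR Pm Xf q = 1 := by
  refine VaR_eq (fun x hx => ?_) (fun x hx => ?_)
  · calc q ≤ 9/10 := hq2
      _ = (Pm {0, 2}).toReal := Pm_02_toReal.symm
      _ ≤ (Pm {ω | Xf ω ≤ x}).toReal := toReal_mono_meas (lev_sup_one hx)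
  · calc (Pm {ω | Xf ω ≤ x}).toReal ≤ (Pm {0}).toReal := toReal_mono_meas (lev_sub_one hx)
      _ = 2/5 := Pm_zero_toReal
      _ < q := hq1

lemma VaR_P_top {q : ℝ} (hq1 : 9/10 < q) (hq2 : q ≤ 1) : VaR Pm Xf q = 2 := by
  refine VaR_eq (fun x hx => ?_) (fun x hx => ?_)
  · rw [lev_univ hx]
    simpa using hq2
  · calc (Pm {ω | Xf ω ≤ x}).toReal ≤ (Pm {0, 2}).toReal := toReal_mono_meas (lev_sub_two hx)
      _ = 9/10 := Pm_02_toReal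
      _ < q := hq1

lemma VaR_Q1_low {q : ℝ} (hq1 : 0 < q) (hq2 : q ≤ 4/5) : VaR Q1 Xf q = 0 := by
  refine VaR_eq (fun x hx => ?_) (fun x hx => ?_)
  · calc q ≤ 4/5 := hq2
      _ = (Q1 {0}).toReal := Q1_zero_toReal.symm
      _ ≤ (Q1 {ω | Xf ω ≤ x}).toReal := toReal_mono_meas (lev_sup_zero hx)
  · calc (Q1 {ω | Xf ω ≤ x}).toReal ≤ (Q1 ∅).toReal := toReal_mono_meas (lev_sub_zero hx)
      _ = 0 := by simp
      _ < q := hq1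

lemma VaR_Q1_top {q : ℝ} (hq1 : 4/5 < q) (hq2 : q ≤ 1) : VaR Q1 Xf q = 2 := by
  refine VaR_eq (fun x hx => ?_) (fun x hx => ?_)
  · rw [lev_univ hx]
    simpa using hq2
  · calc (Q1 {ω | Xf ω ≤ x}).toReal ≤ (Q1 {0, 2}).toReal := toReal_mono_meas (lev_sub_two hx)
      _ = 4/5 := Q1_02_toReal
      _ < q := hq1

lemma VaR_Q2 {q : ℝ} (hq1 : 0 < q) (hq2 : q ≤ 1) : VaR Q2 Xf q = 1 := by
  refine VaR_eq (fun x hx => ?_) (fun x hx => ?_)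
  · calc q ≤ 1 := hq2
      _ = (Q2 {2}).toReal := Q2_two_toReal.symm
      _ ≤ (Q2 {ω | Xf ω ≤ x}).toReal := toReal_mono_meas (lev_sup_two hx)
  · calc (Q2 {ω | Xf ω ≤ x}).toReal ≤ (Q2 {0}).toReal := toReal_mono_meas (lev_sub_one hx)
      _ = 0 := Q2_zero_toReal
      _ < q := hq1

/- step function integral -/
lemma step_int {a b c c1 c2 : ℝ} (hab : a ≤ b) (hbc : b ≤ c) (hc : c1 ≤ c2) :
    (∫ q in a..c, if q ≤ b then c1 else c2) = (b - a) * c1 + (c - b) * c2 := by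
  have hmono : Monotone (fun q : ℝ => if q ≤ b then c1 else c2) := by
    intro s t hst
    by_cases hs : s ≤ b <;> by_cases ht : t ≤ b <;>
      simp only [if_pos, if_neg, hs, ht, ite_true, ite_false, le_refl, hc]
    · exact absurd (hst.trans ht) hs
  rw [← intervalIntegral.integral_add_adjacent_intervals
    (hmono.intervalIntegrable (a := a) (b := b)) (hmono.intervalIntegrable (a := b) (b := c))]
  have e1 : (∫ q in a..b, if q ≤ b then c1 else c2) = (b - a) * c1 := by
    rw [intervalIntegral.integral_congr (g := fun _ => c1) (fun q hq => by
      rw [uIcc_of_le hab] at hq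
      simp [hq.2])]
    simp [mul_comm]
  have e2 : (∫ q in b..c, if q ≤ b then c1 else c2) = (c - b) * c2 := by
    rw [intervalIntegral.integral_congr_ae (g := fun _ => c2) (by
      filter_upwards with q hq
      rw [uIoc_of_le hbc] at hq
      simp [not_le.2 hq.1])]
    simp [mul_comm]
  rw [e1, e2]

lemma ES_P_val : ES Pm Xf (3/5) = 5/4 := by
  have hint : (∫ q in (3/5:ℝ)..1, VaR Pm Xf q)
      = ∫ q in (3/5:ℝ)..1, (if q ≤ 9/10 then (1:ℝ) else 2) := by
    apply intervalIntegral.integral_congr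
    intro q hq
    rw [uIcc_of_le (by norm_num)] at hq
    by_cases h : q ≤ 9/10
    · simp only [if_pos h]; exact VaR_P_mid (by linarith [hq.1]) h
    · simp only [if_neg h]; exact VaR_P_top (not_le.1 h) hq.2
  rw [ES, hint, step_int (by norm_num) (by norm_num) (by norm_num)]
  norm_num

lemma ES_Q1_val : ES Q1 Xf (3/5) = 1 := by
  have hint : (∫ q in (3/5:ℝ)..1, VaR Q1 Xf q)
      = ∫ q in (3/5:ℝ)..1, (if q ≤ 4/5 then (0:ℝ) else 2) := by
    apply intervalIntegral.integral_congr
    intro q hq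
    rw [uIcc_of_le (by norm_num)] at hq
    by_cases h : q ≤ 4/5
    · simp only [if_pos h]; exact VaR_Q1_low (by linarith [hq.1]) h
    · simp only [if_neg h]; exact VaR_Q1_top (not_le.1 h) hq.2
  rw [ES, hint, step_int (by norm_num) (by norm_num) (by norm_num)]
  norm_num

lemma ES_Q2_val : ES Q2 Xf (3/5) = 1 := by
  have hint : (∫ q in (3/5:ℝ)..1, VaR Q2 Xf q)
      = ∫ q in (3/5:ℝ)..1, (if q ≤ (1:ℝ) then (1:ℝ) else 1) := by
    apply intervalIntegral.integral_congr
    intro q hq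
    rw [uIcc_of_le (by norm_num)] at hq
    simp only [if_pos hq.2]
    exact VaR_Q2 (by linarith [hq.1]) hq.2
  rw [ES, hint, step_int (by norm_num) (by norm_num) (by norm_num)]
  norm_num

end MaxESCounter

open MaxESCounter in
theorem max_conditional_es_lt_es :
    ∃ (Ω : Type) (_ : Fintype Ω) (_ : MeasurableSpace Ω) (P : Measure Ω)
      (_ : IsProbabilityMeasure P) (A : Set Ω) (_ : MeasurableSet A)
      (p : ℝ) (_ : p ∈ Set.Ioo (0 : ℝ) 1) (X : Ω → ℝ) (_ : Measurable X),
      0 < P A ∧ P A < 1 ∧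
      max (ES (P[|A]) X p) (ES (P[|Aᶜ]) X p) < ES P X p := by
  refine ⟨Fin 3, inferInstance, inferInstance, Pm, inferInstance, {0, 1},
    meas_A, 3/5, by constructor <;> norm_num, Xf, by measurability, ?_, ?_, ?_⟩
  · rw [Pm_A]
    exact ENNReal.ofReal_pos.2 (by norm_num)
  · rw [Pm_A]
    exact ENNReal.ofReal_lt_one.2 (by norm_num)
  · show max (ES Q1 Xf (3/5)) (ES Q2 Xf (3/5)) < ES Pm Xf (3/5)
    rw [ES_P_val, ES_Q1_val, ES_Q2_val]
    norm_num
end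

section
/- A measurable function f: ℝ^n → ℝ is componentwise concave and submodular if and only if for all x, y, w, z ∈ ℝ^n with w ≤ x, w ≤ y, x ≤ z, y ≤ z (componentwise) and w + z = x + y, we have f(x) + f(y) ≥ f(w) + f(z). -/
open Set

/-- `f` is concave in each coordinate, the others being fixed. -/
def ComponentwiseConcave {n : ℕ} (f : (Fin n → ℝ) → ℝ) : Prop :=
  ∀ (x : Fin n → ℝ) (i : Fin n),
    ConcaveOn ℝ Set.univ (fun t : ℝ => f (Function.update x i t))

/-- `f` is submodular (componentwise max/min). -/
def Submodular {n : ℕ} (f : (Fin n → ℝ) → ℝ) : Prop :=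
  ∀ u v : Fin n → ℝ, f (u ⊔ v) + f (u ⊓ v) ≤ f u + f v

/-!
For `d, e ≥ 0` the inequality `f (b + d + e) + f b ≤ f (b + d) + f (b + e)` (for all `b`) is
additive in `d` and in `e`, so it reduces to `d`, `e` on coordinate axes: on the same axis it is
concavity in that coordinate, on different axes it is submodularity.

Conversely, `w, z = u ⊓ v, u ⊔ v` gives submodularity and `x = y` on a coordinate line gives
midpoint concavity of every section, which for measurable functions implies concavity
(Sierpiński): by Steinhaus some `A + A` with `A = {g ≥ -k}` is a neighbourhood, so `g` is bounded
below near one point, hence near every point and on compact sets, and a midpoint concave function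
bounded below on a segment lies above its chord.
-/

open Topology MeasureTheory Pointwise

lemma IsCompact.bddBelow_image_of_forall_nhds {X : Type*} [TopologicalSpace X] {g : X → ℝ}
    {K : Set X} (hK : IsCompact K) (hloc : ∀ x, ∃ U ∈ 𝓝 x, BddBelow (g '' U)) :
    BddBelow (g '' K) := by
  refine hK.induction_on (p := fun s => BddBelow (g '' s)) (by simp)
    (fun s t hst ht => ht.mono (image_mono hst))
    (fun s t hs ht => by simpa only [image_union] using hs.union ht) fun x _ => ?_
  obtain ⟨U, hU, hbdd⟩ := hloc x
  exact ⟨U, mem_nhdsWithin_of_mem_nhds hU, hbdd⟩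

/-- Fubini: `∫ μ (A ∩ (r - A)) dr = μ A * μ A`. -/
lemma exists_measure_inter_preimage_sub_pos {G : Type*} [MeasurableSpace G] [AddGroup G]
    [MeasurableAdd₂ G] [MeasurableNeg G] (μ : Measure G) [SFinite μ] [μ.IsAddRightInvariant]
    {A : Set G} (hA : MeasurableSet A) (hpos : 0 < μ A) :
    ∃ r, 0 < μ (A ∩ (fun x => r - x) ⁻¹' A) := by
  set S := (fun z : G × G => (z.1, z.2 - z.1)) ⁻¹' A ×ˢ A
  have hS : MeasurableSet S :=
    measurable_fst.prodMk (measurable_snd.sub measurable_fst) (hA.prod hA)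
  have hprod : (μ.prod μ) S = μ A * μ A := by
    rw [(measurePreserving_prod_sub μ μ).measure_preimage (hA.prod hA).nullMeasurableSet,
      Measure.prod_prod]
  by_contra! h
  have hslices : ∀ r, μ ((fun x => (x, r)) ⁻¹' S) = 0 := fun r => nonpos_iff_eq_zero.1 (h r)
  rw [Measure.prod_apply_symm hS, funext hslices, lintegral_zero] at hprod
  exact (ENNReal.mul_pos hpos.ne' hpos.ne').ne' hprod.symm

lemma exists_add_self_mem_nhds {G : Type*} [AddCommGroup G] [TopologicalSpace G]
    [IsTopologicalAddGroup G] [LocallyCompactSpace G] [MeasurableSpace G] [BorelSpace G]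
    [MeasurableAdd₂ G] [MeasurableNeg G] (μ : Measure G) [μ.IsAddHaarMeasure] [μ.InnerRegular]
    [SFinite μ] {A : Set G} (hA : MeasurableSet A) (hpos : 0 < μ A) : ∃ r, A + A ∈ 𝓝 r := by
  obtain ⟨r, hr⟩ := exists_measure_inter_preimage_sub_pos μ hA hpos
  set B := A ∩ (fun x => r - x) ⁻¹' A
  have hB : MeasurableSet B := hA.inter (measurable_const.sub measurable_id hA)
  have h0 : B - B ∈ 𝓝 (0 : G) := Measure.sub_mem_nhds_zero_of_addHaar_pos μ B hB hr
  refine ⟨r, Filter.mem_of_superset ((continuous_sub_right r).continuousAt.preimage_mem_nhds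
    (by simpa using h0)) ?_⟩
  rintro t ⟨p, ⟨hp, -⟩, q, ⟨-, hq⟩, hpq⟩
  refine ⟨p, hp, r - q, hq, ?_⟩
  simp only at hpq ⊢
  rw [← sub_add_cancel t r, ← hpq]
  abel

def MidpointConcave (g : ℝ → ℝ) : Prop :=
  ∀ x y, g x + g y ≤ 2 * g ((x + y) / 2)

namespace MidpointConcave

variable {g : ℝ → ℝ}

lemma comp_affine (hg : MidpointConcave g) (a b : ℝ) :
    MidpointConcave fun t => g (a * t + b) := by
  intro s t
  convert hg (a * s + b) (a * t + b) using 3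
  ring

lemma sub_affine (hg : MidpointConcave g) (a b : ℝ) :
    MidpointConcave fun t => g t - (a * t + b) := by
  intro s t
  linarith [hg s t]

/-- Every point of `[0, 1]` is the midpoint of an endpoint and a point of `[0, 1]`, so the infimum
`m` of `φ` on `[0, 1]` satisfies `m ≤ m / 2`. -/
lemma nonneg_of_bddBelow_Icc {φ : ℝ → ℝ} (hφ : MidpointConcave φ) (h₀ : φ 0 = 0) (h₁ : φ 1 = 0)
    (hbdd : BddBelow (φ '' Icc 0 1)) {t : ℝ} (ht : t ∈ Icc (0 : ℝ) 1) : 0 ≤ φ t := by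
  set m := sInf (φ '' Icc 0 1)
  have hm : ∀ s ∈ Icc (0 : ℝ) 1, m ≤ φ s := fun s hs => csInf_le hbdd (mem_image_of_mem φ hs)
  have half_le : ∀ s ∈ Icc (0 : ℝ) 1, m / 2 ≤ φ s := by
    rintro s ⟨hs₀, hs₁⟩
    rcases le_total s (1 / 2) with hs | hs
    · have := hφ 0 (2 * s)
      rw [show (0 + 2 * s) / 2 = s by ring] at this
      linarith [hm (2 * s) ⟨by linarith, by linarith⟩]
    · have := hφ 1 (2 * s - 1)
      rw [show (1 + (2 * s - 1)) / 2 = s by ring] at this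
      linarith [hm (2 * s - 1) ⟨by linarith, by linarith⟩]
  have : m / 2 ≤ m := le_csInf (nonempty_Icc.2 zero_le_one |>.image φ) (by
    rintro _ ⟨s, hs, rfl⟩
    exact half_le s hs)
  linarith [hm t ht]

lemma combo_le_of_bddBelow_Icc (hg : MidpointConcave g) (hbdd : BddBelow (g '' Icc 0 1)) {t : ℝ}
    (ht : t ∈ Icc (0 : ℝ) 1) : (1 - t) * g 0 + t * g 1 ≤ g t := by
  obtain ⟨C, hC⟩ := hbdd
  obtain ⟨D, hD⟩ := isCompact_Icc.bddAbove_image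
    (f := fun t => (g 1 - g 0) * t + g 0) (Continuous.continuousOn (by fun_prop))
  have := (hg.sub_affine (g 1 - g 0) (g 0)).nonneg_of_bddBelow_Icc (by simp) (by simp) ⟨C - D, by
    rintro _ ⟨s, hs, rfl⟩
    linarith [hC (mem_image_of_mem g hs), hD (mem_image_of_mem _ hs)]⟩ ht
  linarith

lemma concaveOn_of_bddBelow (hg : MidpointConcave g)
    (hbdd : ∀ K, IsCompact K → BddBelow (g '' K)) : ConcaveOn ℝ univ g := by
  refine ⟨convex_univ, fun x _ y _ a b _ hb hab => ?_⟩
  obtain rfl : a = 1 - b := by linarith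
  have hline : BddBelow ((fun t => g ((y - x) * t + x)) '' Icc 0 1) := by
    rw [← image_image g]
    exact hbdd _ (isCompact_Icc.image (by fun_prop))
  have := (hg.comp_affine (y - x) x).combo_le_of_bddBelow_Icc hline ⟨hb, by linarith⟩
  simp only [mul_zero, zero_add, mul_one, sub_add_cancel] at this
  simpa only [smul_eq_mul, show (1 - b) * x + b * y = (y - x) * b + x by ring]

lemma exists_nhds_bddBelow (hg : MidpointConcave g) (hmeas : Measurable g) :
    ∃ c, ∃ U ∈ 𝓝 c, BddBelow (g '' U) := by
  have hcover : ⋃ k : ℕ, g ⁻¹' Ici (-k : ℝ) = univ :=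
    eq_univ_of_forall fun x => mem_iUnion.2 <| (exists_nat_ge (-g x)).imp fun k hk => by
      simp only [mem_preimage, mem_Ici]
      linarith
  obtain ⟨k, hk⟩ : ∃ k : ℕ, 0 < volume (g ⁻¹' Ici (-k : ℝ)) :=
    exists_measure_pos_of_not_measure_iUnion_null (by simp [hcover])
  obtain ⟨r, hr⟩ := exists_add_self_mem_nhds volume (hmeas measurableSet_Ici) hk
  refine ⟨r / 2, (fun t => 2 * t) ⁻¹' (g ⁻¹' Ici (-k : ℝ) + g ⁻¹' Ici (-k : ℝ)), ?_, -k, ?_⟩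
  · exact (continuous_const_mul 2).continuousAt.preimage_mem_nhds
      (by rwa [mul_div_cancel₀ r two_ne_zero])
  · rintro _ ⟨t, ⟨p, hp, q, hq, hpq⟩, rfl⟩
    have := hg p q
    simp only at hpq
    rw [hpq, mul_div_cancel_left₀ t two_ne_zero] at this
    linarith [mem_Ici.1 (mem_preimage.1 hp), mem_Ici.1 (mem_preimage.1 hq)]

lemma forall_exists_nhds_bddBelow (hg : MidpointConcave g) {c : ℝ} {U : Set ℝ} (hU : U ∈ 𝓝 c)
    (hbdd : BddBelow (g '' U)) (p : ℝ) : ∃ V ∈ 𝓝 p, BddBelow (g '' V) := by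
  obtain ⟨m, hm⟩ := hbdd
  refine ⟨(fun t => 2 * t - (2 * p - c)) ⁻¹' U, ?_, (g (2 * p - c) + m) / 2, ?_⟩
  · exact ContinuousAt.preimage_mem_nhds (by fun_prop) (by convert hU using 2; ring)
  · rintro _ ⟨t, ht, rfl⟩
    have := hg (2 * p - c) (2 * t - (2 * p - c))
    rw [show (2 * p - c + (2 * t - (2 * p - c))) / 2 = t by ring] at this
    linarith [hm (mem_image_of_mem g ht)]

theorem concaveOn_of_measurable (hg : MidpointConcave g) (hmeas : Measurable g) :
    ConcaveOn ℝ univ g := by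
  obtain ⟨c, U, hU, hbdd⟩ := hg.exists_nhds_bddBelow hmeas
  exact hg.concaveOn_of_bddBelow fun K hK =>
    hK.bddBelow_image_of_forall_nhds (hg.forall_exists_nhds_bddBelow hU hbdd)

end MidpointConcave

def DiminishingReturns {G : Type*} [AddCommMonoid G] (f : G → ℝ) (d e : G) : Prop :=
  ∀ b, f (b + d + e) + f b ≤ f (b + d) + f (b + e)

namespace DiminishingReturns

variable {G : Type*} [AddCommMonoid G] {f : G → ℝ}

lemma symm {d e : G} (h : DiminishingReturns f d e) : DiminishingReturns f e d := fun b => by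
  rw [add_right_comm]
  linarith [h b]

lemma zero_left (e : G) : DiminishingReturns f 0 e := fun b => by
  rw [add_zero, add_comm (f _)]

lemma add_left {d₁ d₂ e : G} (h₁ : DiminishingReturns f d₁ e) (h₂ : DiminishingReturns f d₂ e) :
    DiminishingReturns f (d₁ + d₂) e := fun b => by
  rw [← add_assoc]
  linarith [h₁ b, h₂ (b + d₁)]

lemma sum_left {ι : Type*} (s : Finset ι) (d : ι → G) {e : G}
    (h : ∀ i ∈ s, DiminishingReturns f (d i) e) : DiminishingReturns f (∑ i ∈ s, d i) e :=
  Finset.sum_induction d (DiminishingReturns f · e) (fun _ _ => add_left) (zero_left e) h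

end DiminishingReturns

/-- `x + a` and `x + b` are the convex combinations of `x` and `x + a + b` with swapped weights. -/
lemma ConcaveOn.diminishingReturns {g : ℝ → ℝ} (hg : ConcaveOn ℝ univ g) {a b : ℝ} (ha : 0 ≤ a)
    (hb : 0 ≤ b) : DiminishingReturns g a b := by
  intro x
  rcases (add_nonneg ha hb).eq_or_lt with hab | hab
  · obtain ⟨rfl, rfl⟩ : a = 0 ∧ b = 0 := ⟨by linarith, by linarith⟩
    simp
  obtain ⟨t, ht⟩ : ∃ t, t = a / (a + b) := ⟨_, rfl⟩
  have hta : t * (a + b) = a := by rw [ht]; field_simp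
  have ht₀ : 0 ≤ t := ht ▸ div_nonneg ha hab.le
  have ht₁ : 0 ≤ 1 - t := by rw [ht, sub_nonneg, div_le_one hab]; linarith
  have h₁ := hg.2 (mem_univ x) (mem_univ (x + a + b)) ht₁ ht₀ (by ring)
  have h₂ := hg.2 (mem_univ x) (mem_univ (x + a + b)) ht₀ ht₁ (by ring)
  simp only [smul_eq_mul] at h₁ h₂
  rw [show (1 - t) * x + t * (x + a + b) = x + a by linear_combination hta] at h₁
  rw [show t * x + (1 - t) * (x + a + b) = x + b by linear_combination -hta] at h₂
  linear_combination h₁ + h₂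

lemma add_single_eq_update {ι M : Type*} [DecidableEq ι] [AddZeroClass M] (b : ι → M) (i : ι)
    (t : M) :
    b + Pi.single i t = Function.update b i (b i + t) := by
  ext j
  rcases eq_or_ne j i with rfl | h <;> simp [*]

section

variable {n : ℕ} {f : (Fin n → ℝ) → ℝ}

lemma diminishingReturns_single_single (hcc : ComponentwiseConcave f) (hsm : Submodular f)
    (i j : Fin n) {s t : ℝ} (hs : 0 ≤ s) (ht : 0 ≤ t) :
    DiminishingReturns f (Pi.single i s) (Pi.single j t) := by
  intro b
  rcases eq_or_ne i j with rfl | hij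
  · rw [add_assoc, ← Pi.single_add]
    simp only [add_single_eq_update, ← add_assoc]
    simpa only [Function.update_eq_self] using (hcc b i).diminishingReturns hs ht (b i)
  · have hsup : (b + Pi.single i s) ⊔ (b + Pi.single j t) = b + Pi.single i s + Pi.single j t := by
      ext k
      by_cases hki : k = i <;> by_cases hkj : k = j <;> simp_all
    have hinf : (b + Pi.single i s) ⊓ (b + Pi.single j t) = b := by
      ext k
      by_cases hki : k = i <;> by_cases hkj : k = j <;> simp_all
    have := hsm (b + Pi.single i s) (b + Pi.single j t)
    rwa [hsup, hinf] at this

lemma ComponentwiseConcave.diminishingReturns (hcc : ComponentwiseConcave f) (hsm : Submodular f)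
    {d e : Fin n → ℝ} (hd : 0 ≤ d) (he : 0 ≤ e) : DiminishingReturns f d e := by
  rw [← Finset.univ_sum_single d]
  refine DiminishingReturns.sum_left _ _ fun i _ => ?_
  rw [← Finset.univ_sum_single e]
  exact (DiminishingReturns.sum_left _ _ fun j _ =>
    (diminishingReturns_single_single hcc hsm i j (hd i) (he j)).symm).symm

lemma midpointConcave_update
    (H : ∀ x y w z : Fin n → ℝ, w ≤ x → w ≤ y → x ≤ z → y ≤ z → w + z = x + y →
      f w + f z ≤ f x + f y) (x : Fin n → ℝ) (i : Fin n) :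
    MidpointConcave fun t => f (Function.update x i t) := by
  intro s t
  wlog hst : s ≤ t generalizing s t
  · rw [add_comm s t, add_comm (f _)]
    exact this t s (le_of_not_ge hst)
  set m := (s + t) / 2 with hm
  have hsm : Function.update x i s ≤ Function.update x i m :=
    update_le_update_iff'.2 (by linarith [hm])
  have hmt : Function.update x i m ≤ Function.update x i t :=
    update_le_update_iff'.2 (by linarith [hm])
  have hsum : Function.update x i s + Function.update x i t =
      Function.update x i m + Function.update x i m := by
    rw [← Function.update_add, ← Function.update_add, show s + t = m + m by ring]
  linarith [H _ _ _ _ hsm hsm hmt hmt hsum]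

end

theorem componentwiseConcave_submodular_iff {n : ℕ} (f : (Fin n → ℝ) → ℝ)
    (hf : Measurable f) :
    (ComponentwiseConcave f ∧ Submodular f) ↔
      (∀ x y w z : Fin n → ℝ, w ≤ x → w ≤ y → x ≤ z → y ≤ z → w + z = x + y →
        f w + f z ≤ f x + f y) := by
  constructor
  · rintro ⟨hcc, hsm⟩ x y w z hwx hwy - - hsum
    have hz : w + (x - w) + (y - w) = z := by
      rw [← add_sub_cancel_left w z, hsum]
      abel
    have := hcc.diminishingReturns hsm (sub_nonneg.2 hwx) (sub_nonneg.2 hwy) w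
    rwa [hz, add_sub_cancel, add_sub_cancel, add_comm (f z)] at this
  · intro H
    refine ⟨fun x i => (midpointConcave_update H x i).concaveOn_of_measurable
      (hf.comp (measurable_update x)), fun u v => ?_⟩
    linarith [H u v (u ⊓ v) (u ⊔ v) inf_le_left inf_le_right le_sup_left le_sup_right
      (inf_add_sup u v)]
end

section
/- Let Q1,...,Qn be probability measures on (Ω, F) and ψ: [0,1]^n → [0,1] with ψ(0)=0, ψ(1)=1. If ψ is componentwise increasing, then the set function A ↦ ψ(Q1(A),...,Qn(A)) is monotone (increasing under set inclusion). If moreover ψ is componentwise concave and submodular, then this set function is submodular: c(A∪B) + c(A∩B) ≤ c(A) + c(B) for all A, B ∈ F. -/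
open MeasureTheory Set

/-- The unit cube `[0,1]^n`. -/
def unitCube (n : ℕ) : Set (Fin n → ℝ) := {x | ∀ i, x i ∈ Set.Icc (0 : ℝ) 1}

/-!
Monotonicity is immediate. For submodularity, modularity of each `Qᵢ` gives
`Q(A ∪ B) + Q(A ∩ B) = Q(A) + Q(B)` as vectors, with `Q(A ∩ B) ≤ Q(A), Q(B)`. So it suffices that
`ψ z + ψ w ≤ ψ x + ψ y` whenever `w ≤ x, y` and `x + y = z + w`. Submodularity of `ψ` reduces this
to the chain `w ≤ x ⊓ y ≤ x ⊔ y ≤ z`, which is handled one coordinate at a time: raising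
coordinate `i` of the upper point `Z` to `d` and lowering that of the lower point `W` to `a`, with
`a + d = W i + Z i`, does not increase `ψ Z + ψ W`. This follows from submodularity applied to `Z`
and `W` with its `i`-th coordinate raised to `d`, and concavity of `ψ` along coordinate `i` at `W`.
-/

open Function

theorem ConcaveOn.add_le_add_of_add_eq {f : ℝ → ℝ} {s : Set ℝ} (hf : ConcaveOn ℝ s f)
    {a b c d : ℝ} (ha : a ∈ s) (hd : d ∈ s) (hab : a ≤ b) (hac : a ≤ c) (hsum : b + c = a + d) :
    f a + f d ≤ f b + f c := by
  obtain rfl | had := (show a ≤ d by linarith).eq_or_lt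
  · obtain rfl : b = a := by linarith
    obtain rfl : c = b := by linarith
    rfl
  have hda : d - a ≠ 0 := (sub_pos.2 had).ne'
  have secant_le : ∀ x, a ≤ x → x ≤ d →
      (d - x) / (d - a) * f a + (x - a) / (d - a) * f d ≤ f x := fun x hax hxd => by
    have h := hf.2 ha hd (div_nonneg (sub_nonneg.2 hxd) (sub_pos.2 had).le)
      (div_nonneg (sub_nonneg.2 hax) (sub_pos.2 had).le) (by field_simp; ring)
    have hx : (d - x) / (d - a) * a + (x - a) / (d - a) * d = x := by field_simp; ring
    simpa only [smul_eq_mul, hx] using h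
  have hb := secant_le b hab (by linarith)
  have hc := secant_le c hac (by linarith)
  have hfa : (d - b) / (d - a) + (d - c) / (d - a) = 1 := by field_simp; linarith
  have hfd : (b - a) / (d - a) + (c - a) / (d - a) = 1 := by field_simp; linarith
  linear_combination hb + hc - f a * hfa - f d * hfd

def SubmodularOn {α : Type*} [Lattice α] (D : Set α) (ψ : α → ℝ) : Prop :=
  ∀ u ∈ D, ∀ v ∈ D, ψ (u ⊔ v) + ψ (u ⊓ v) ≤ ψ u + ψ v

def ConcaveOnEachCoordinate {ι : Type*} [DecidableEq ι] (I : Set ℝ) (ψ : (ι → ℝ) → ℝ) : Prop :=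
  ∀ x : ι → ℝ, (∀ i, x i ∈ I) → ∀ i, ConcaveOn ℝ I fun t => ψ (update x i t)

namespace ConcaveOnEachCoordinate

variable {ι : Type*} [DecidableEq ι] {I : Set ℝ} {ψ : (ι → ℝ) → ℝ}

theorem map_update_add_map_update_le (hconc : ConcaveOnEachCoordinate I ψ)
    (hsub : SubmodularOn {x | ∀ i, x i ∈ I} ψ) {Z W : ι → ℝ} (hZ : ∀ j, Z j ∈ I)
    (hW : ∀ j, W j ∈ I) (hWZ : W ≤ Z) (i : ι) {a d : ℝ} (ha : a ∈ I) (hd : d ∈ I)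
    (haW : a ≤ W i) (hZd : Z i ≤ d) (hsum : W i + Z i = a + d) :
    ψ (update Z i d) + ψ (update W i a) ≤ ψ Z + ψ W := by
  have hWd : ∀ j, update W i d j ∈ I := fun j => by
    rcases eq_or_ne j i with rfl | hj <;> simp [*]
  have hsup : Z ⊔ update W i d = update Z i d := by
    ext j; rcases eq_or_ne j i with rfl | hj <;> simp [*, hWZ j]
  have hinf : Z ⊓ update W i d = update W i (Z i) := by
    ext j; rcases eq_or_ne j i with rfl | hj <;> simp [*, hWZ j]
  have hmod := hsub Z hZ (update W i d) hWd
  rw [hsup, hinf] at hmod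
  have hcoord := (hconc W hW i).add_le_add_of_add_eq ha hd haW (haW.trans (hWZ i)) hsum
  rw [update_eq_self] at hcoord
  linarith

theorem map_piecewise_add_map_piecewise_le (hconc : ConcaveOnEachCoordinate I ψ)
    (hsub : SubmodularOn {x | ∀ i, x i ∈ I} ψ) {w x y z : ι → ℝ} (hw : ∀ i, w i ∈ I)
    (hx : ∀ i, x i ∈ I) (hy : ∀ i, y i ∈ I) (hz : ∀ i, z i ∈ I)
    (hwy : w ≤ y) (hyx : y ≤ x) (hxz : x ≤ z) (hsum : x + y = z + w) (S : Finset ι) :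
    ψ (S.piecewise z x) + ψ (S.piecewise w y) ≤ ψ x + ψ y := by
  induction S using Finset.induction_on with
  | empty => simp
  | @insert i S hiS ih =>
    rw [Finset.piecewise_insert, Finset.piecewise_insert]
    have hstep := hconc.map_update_add_map_update_le hsub
      (fun j => S.piecewise_cases z x (· ∈ I) (hz j) (hx j))
      (fun j => S.piecewise_cases w y (· ∈ I) (hw j) (hy j))
      (S.piecewise_le_piecewise (hwy.trans (hyx.trans hxz)) hyx) i (hw i) (hz i)
      (by simpa [hiS] using hwy i) (by simpa [hiS] using hxz i)
      (by simp only [Finset.piecewise_eq_of_notMem _ _ _ hiS]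
          linarith [congrFun hsum i, Pi.add_apply x y i, Pi.add_apply z w i])
    linarith

theorem map_add_map_le_of_le_of_le [Fintype ι] (hconc : ConcaveOnEachCoordinate I ψ)
    (hsub : SubmodularOn {x | ∀ i, x i ∈ I} ψ) {w x y z : ι → ℝ} (hw : ∀ i, w i ∈ I)
    (hx : ∀ i, x i ∈ I) (hy : ∀ i, y i ∈ I) (hz : ∀ i, z i ∈ I)
    (hwy : w ≤ y) (hyx : y ≤ x) (hxz : x ≤ z) (hsum : x + y = z + w) :
    ψ z + ψ w ≤ ψ x + ψ y := by
  simpa using hconc.map_piecewise_add_map_piecewise_le hsub hw hx hy hz hwy hyx hxz hsum .univ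

theorem map_add_map_le [Fintype ι] (hconc : ConcaveOnEachCoordinate I ψ)
    (hsub : SubmodularOn {x | ∀ i, x i ∈ I} ψ) {w x y z : ι → ℝ} (hw : ∀ i, w i ∈ I)
    (hx : ∀ i, x i ∈ I) (hy : ∀ i, y i ∈ I) (hz : ∀ i, z i ∈ I)
    (hwx : w ≤ x) (hwy : w ≤ y) (hsum : x + y = z + w) :
    ψ z + ψ w ≤ ψ x + ψ y := by
  have hsup : ∀ i, (x ⊔ y) i ∈ I := fun i => max_rec' (· ∈ I) (hx i) (hy i)
  have hinf : ∀ i, (x ⊓ y) i ∈ I := fun i => min_rec' (· ∈ I) (hx i) (hy i)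
  have hsum' : x ⊔ y + x ⊓ y = z + w := by
    rw [← hsum]; ext i; exact max_add_min (x i) (y i)
  have hxz : x ⊔ y ≤ z := fun i => by
    have hsum_i : x i + y i = z i + w i := congrFun hsum i
    exact max_le (by linarith [hwy i]) (by linarith [hwx i])
  calc ψ z + ψ w ≤ ψ (x ⊔ y) + ψ (x ⊓ y) :=
        hconc.map_add_map_le_of_le_of_le hsub hw hsup hinf hz (le_inf hwx hwy) inf_le_sup hxz hsum'
    _ ≤ ψ x + ψ y := hsub x hx y hy

end ConcaveOnEachCoordinate

theorem distorted_set_function_monotone_and_submodular_general {Ω : Type*} [MeasurableSpace Ω]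
    (n : ℕ) (Q : Fin n → Measure Ω) (hprob : ∀ i, IsProbabilityMeasure (Q i))
    (ψ : (Fin n → ℝ) → ℝ)
    (hinc : ∀ x ∈ unitCube n, ∀ y ∈ unitCube n, x ≤ y → ψ x ≤ ψ y) :
    (∀ A B : Set Ω, MeasurableSet A → MeasurableSet B → A ⊆ B →
        ψ (fun i => (Q i A).toReal) ≤ ψ (fun i => (Q i B).toReal)) ∧
    ((∀ x ∈ unitCube n, ∀ i : Fin n,
        ConcaveOn ℝ (Set.Icc (0 : ℝ) 1) (fun t : ℝ => ψ (Function.update x i t))) →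
     (∀ u ∈ unitCube n, ∀ v ∈ unitCube n, ψ (u ⊔ v) + ψ (u ⊓ v) ≤ ψ u + ψ v) →
     (∀ A B : Set Ω, MeasurableSet A → MeasurableSet B →
        ψ (fun i => (Q i (A ∪ B)).toReal) + ψ (fun i => (Q i (A ∩ B)).toReal)
          ≤ ψ (fun i => (Q i A).toReal) + ψ (fun i => (Q i B).toReal))) := by
  have hcube (A : Set Ω) : (fun i => (Q i A).toReal) ∈ unitCube n :=
    fun _ => ⟨measureReal_nonneg, measureReal_le_one⟩
  have hmono {A B : Set Ω} (hAB : A ⊆ B) : (fun i => (Q i A).toReal) ≤ fun i => (Q i B).toReal :=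
    fun _ => measureReal_mono hAB
  refine ⟨fun A B _ _ hAB => hinc _ (hcube A) _ (hcube B) (hmono hAB),
    fun hconc hsub A B _ hB => ?_⟩
  exact ConcaveOnEachCoordinate.map_add_map_le hconc hsub (hcube _) (hcube A) (hcube B) (hcube _)
    (hmono inter_subset_left) (hmono inter_subset_right)
    (funext fun _ => (measureReal_union_add_inter hB).symm)

theorem distorted_set_function_monotone_and_submodular {Ω : Type*} [MeasurableSpace Ω]
    (n : ℕ) (Q : Fin n → Measure Ω) (hprob : ∀ i, IsProbabilityMeasure (Q i))
    (ψ : (Fin n → ℝ) → ℝ)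
    (hψ0 : ψ (fun _ => 0) = 0) (hψ1 : ψ (fun _ => 1) = 1)
    (hψrange : ∀ x ∈ unitCube n, ψ x ∈ Set.Icc (0 : ℝ) 1)
    (hinc : ∀ x ∈ unitCube n, ∀ y ∈ unitCube n, x ≤ y → ψ x ≤ ψ y) :
    (∀ A B : Set Ω, MeasurableSet A → MeasurableSet B → A ⊆ B →
        ψ (fun i => (Q i A).toReal) ≤ ψ (fun i => (Q i B).toReal)) ∧
    ((∀ x ∈ unitCube n, ∀ i : Fin n,
        ConcaveOn ℝ (Set.Icc (0 : ℝ) 1) (fun t : ℝ => ψ (Function.update x i t))) →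
     (∀ u ∈ unitCube n, ∀ v ∈ unitCube n, ψ (u ⊔ v) + ψ (u ⊓ v) ≤ ψ u + ψ v) →
     (∀ A B : Set Ω, MeasurableSet A → MeasurableSet B →
        ψ (fun i => (Q i (A ∪ B)).toReal) + ψ (fun i => (Q i (A ∩ B)).toReal)
          ≤ ψ (fun i => (Q i A).toReal) + ψ (fun i => (Q i B).toReal))) :=
  distorted_set_function_monotone_and_submodular_general n Q hprob ψ hinc
end

section
/- Let X1,...,Xn be iid bounded random variables under ℙ, each distributed as X. Then MINVAR(X) = E^ℙ[max{X1,...,Xn}] equals the Choquet integral of X with respect to the submodular standard set function c(A) = 1 - (1 - ℙ(A))^n; in particular, MINVAR is a coherent, comonotonic-additive risk measure. -/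
/-!
If `X₁, …, Xₙ` are iid copies of `X`, then `max Xᵢ ≤ t` exactly when every `Xᵢ ≤ t`, so the
tail of the maximum is `1 - (1 - ℙ(X > t))ⁿ`. For a bounded `Z`, the layer-cake formula
`E Z = ∫_{-∞}^0 (ℙ(Z > t) - 1) dt + ∫_0^∞ ℙ(Z > t) dt` (the nonnegative one applied to `Z + M`)
then identifies `E (max Xᵢ)` with the Choquet integral for `c = ψ ∘ ℙ`, `ψ p = 1 - (1 - p)ⁿ`.
Submodularity of `c` is the concavity of `ψ`: `ℙ(A ∩ B) ≤ ℙ A, ℙ B ≤ ℙ(A ∪ B)` with equal sums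
of the inner and outer pairs. The coherence properties hold pointwise for a finite maximum and
pass through the expectation; comonotone `X, Y` attain their maxima over a sample at a common
index, which makes the maximum of `X + Y` split.
-/

open MeasureTheory Set

noncomputable def choquet {Ω : Type*} (c : Set Ω → ℝ) (X : Ω → ℝ) : ℝ :=
  (∫ x in Set.Iio (0 : ℝ), (c {ω | x < X ω} - 1)) + ∫ x in Set.Ioi (0 : ℝ), c {ω | x < X ω}

/-- MINVAR: the expectation, under the product of `n` copies of `P`, of the maximum of
the `n` iid coordinate copies of `X`. -/
noncomputable def MINVAR {Ω : Type*} [MeasurableSpace Ω] (P : Measure Ω) (n : ℕ)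
    (X : Ω → ℝ) : ℝ :=
  ∫ ω, (⨆ i : Fin n, X (ω i)) ∂(Measure.pi fun _ : Fin n => P)

theorem ConcaveOn.add_le_add_of_add_eq_s14 {D : Set ℝ} {f : ℝ → ℝ} (hf : ConcaveOn ℝ D f)
    {x y s t : ℝ} (hx : x ∈ D) (hy : y ∈ D) (hxs : x ≤ s) (hsy : s ≤ y)
    (hst : s + t = x + y) : f x + f y ≤ f s + f t := by
  rcases hxs.eq_or_lt' with rfl | hxs'
  · rw [show t = y by linarith]
  set l := (y - s) / (y - x)
  have hyx : 0 < y - x := by linarith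
  have hl : l * (y - x) = y - s := div_mul_cancel₀ _ hyx.ne'
  have hl0 : 0 ≤ l := div_nonneg (by linarith) hyx.le
  have hl1 : 0 ≤ 1 - l := by rw [sub_nonneg, div_le_one hyx]; linarith
  have hs : l * x + (1 - l) * y = s := by linear_combination -hl
  have ht : (1 - l) * x + l * y = t := by linear_combination hl - hst
  have h₁ := hf.2 hx hy hl0 hl1 (by ring)
  have h₂ := hf.2 hx hy hl1 hl0 (by ring)
  simp only [smul_eq_mul, hs, ht] at h₁ h₂
  linarith

theorem concaveOn_one_sub_one_sub_pow (n : ℕ) :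
    ConcaveOn ℝ (Iic 1) fun p : ℝ => 1 - (1 - p) ^ n := by
  refine ⟨convex_Iic 1, fun x hx y hy a b ha hb hab => ?_⟩
  have h := (convexOn_pow n).2 (mem_Ici.2 (sub_nonneg.2 hx)) (mem_Ici.2 (sub_nonneg.2 hy)) ha hb hab
  have hcomb : a • (1 - x) + b • (1 - y) = 1 - (a • x + b • y) := by
    simp only [smul_eq_mul]; linear_combination hab
  simp only [smul_eq_mul] at h hcomb ⊢
  rw [hcomb] at h
  linear_combination h + hab

theorem ConcaveOn.measureReal_union_add_inter_le {Ω : Type*} [MeasurableSpace Ω]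
    {P : Measure Ω} [IsProbabilityMeasure P] {ψ : ℝ → ℝ} (hψ : ConcaveOn ℝ (Icc 0 1) ψ)
    {A B : Set Ω} (hB : MeasurableSet B) :
    ψ (P.real (A ∪ B)) + ψ (P.real (A ∩ B)) ≤ ψ (P.real A) + ψ (P.real B) := by
  have hmem : ∀ C : Set Ω, P.real C ∈ Icc (0 : ℝ) 1 := fun _ =>
    ⟨measureReal_nonneg, measureReal_le_one⟩
  rw [add_comm]
  exact hψ.add_le_add_of_add_eq_s14 (hmem _) (hmem _) (measureReal_mono inter_subset_left)
    (measureReal_mono subset_union_left)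
    (by rw [add_comm (P.real (A ∩ B)), measureReal_union_add_inter hB])

theorem ciSup_add_eq_of_comonotone {ι : Type*} [Finite ι] [Nonempty ι] {f g : ι → ℝ}
    (hfg : ∀ i j, 0 ≤ (f i - f j) * (g i - g j)) :
    ⨆ i, (f i + g i) = (⨆ i, f i) + ⨆ i, g i := by
  obtain ⟨i₀, hi₀⟩ := Finite.exists_max fun i => f i + g i
  -- if `f` or `g` exceeded its value at `i₀`, comonotonicity would make the other one weakly
  -- exceed its value too, contradicting the maximality of `f + g` at `i₀`
  have hf : ∀ j, f j ≤ f i₀ := fun j => by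
    by_contra! h
    nlinarith [hfg j i₀, hi₀ j]
  have hg : ∀ j, g j ≤ g i₀ := fun j => by
    by_contra! h
    nlinarith [hfg j i₀, hi₀ j]
  have hsup : ∀ {u : ι → ℝ}, (∀ j, u j ≤ u i₀) → ⨆ i, u i = u i₀ := fun hu =>
    le_antisymm (ciSup_le hu) (le_ciSup (Finite.bddAbove_range _) i₀)
  rw [hsup hi₀, hsup hf, hsup hg]

theorem BddRV.integrable {α : Type*} [MeasurableSpace α] {μ : Measure α} [IsFiniteMeasure μ]
    {X : α → ℝ} (hb : BddRV X) (hX : AEStronglyMeasurable X μ) : Integrable X μ := by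
  obtain ⟨M, hM⟩ := hb
  exact (integrable_const M).mono' hX (ae_of_all _ hM)

theorem BddRV.add {Ω : Type*} {X Y : Ω → ℝ} (hX : BddRV X) (hY : BddRV Y) :
    BddRV fun ω => X ω + Y ω := by
  obtain ⟨M, hM⟩ := hX
  obtain ⟨N, hN⟩ := hY
  exact ⟨M + N, fun ω => (abs_add_le _ _).trans (add_le_add (hM ω) (hN ω))⟩

theorem BddRV.iSup_comp_apply {Ω ι : Type*} [Finite ι] [Nonempty ι] {X : Ω → ℝ}
    (hX : BddRV X) : BddRV fun ω : ι → Ω => ⨆ i, X (ω i) := by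
  obtain ⟨M, hM⟩ := hX
  refine ⟨M, fun ω => abs_le.2 ⟨?_, ciSup_le fun i => (abs_le.1 (hM _)).2⟩⟩
  obtain ⟨i₀⟩ := ‹Nonempty ι›
  exact (abs_le.1 (hM (ω i₀))).1.trans (le_ciSup (Finite.bddAbove_range fun i => X (ω i)) i₀)

theorem setIntegral_Ioi_eq_intervalIntegral {f : ℝ → ℝ} {a b : ℝ} (hab : a ≤ b)
    (hf : ∀ t, b < t → f t = 0) : ∫ t in Ioi a, f t = ∫ t in a..b, f t := by
  rw [intervalIntegral.integral_of_le hab]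
  exact setIntegral_eq_of_subset_of_forall_sdiff_eq_zero measurableSet_Ioi Ioc_subset_Ioi_self
    fun t ⟨hat, ht⟩ => hf t (lt_of_not_ge fun htb => ht ⟨hat, htb⟩)

theorem setIntegral_Iio_eq_intervalIntegral {f : ℝ → ℝ} {a b : ℝ} (hab : a ≤ b)
    (hf : ∀ t ≤ a, f t = 0) : ∫ t in Iio b, f t = ∫ t in a..b, f t := by
  rw [intervalIntegral.integral_of_le hab, ← integral_Iic_eq_integral_Iio]
  exact setIntegral_eq_of_subset_of_forall_sdiff_eq_zero measurableSet_Iic Ioc_subset_Iic_self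
    fun t ⟨htb, ht⟩ => hf t (le_of_not_gt fun hat => ht ⟨hat, htb⟩)

theorem integral_eq_choquet {α : Type*} [MeasurableSpace α] (μ : Measure α)
    [IsProbabilityMeasure μ] {Z : α → ℝ} (hZ : AEStronglyMeasurable Z μ) (hb : BddRV Z) :
    ∫ a, Z a ∂μ = choquet μ.real Z := by
  obtain ⟨M₀, hM₀⟩ := hb
  -- a strict bound makes `G = 1` on all of `Iic (-M)`, not only on `Iio (-M)`
  set M := |M₀| + 1
  have hZM : ∀ a, -M < Z a ∧ Z a < M := fun a =>
    abs_lt.1 ((hM₀ a).trans_lt ((le_abs_self M₀).trans_lt (lt_add_one _)))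
  have hM : 0 < M := by positivity
  set G : ℝ → ℝ := fun t => μ.real {a | t < Z a}
  have hG_anti : Antitone G := fun s t hst =>
    measureReal_mono fun a (ha : t < Z a) => hst.trans_lt ha
  have hG_top : ∀ t, M ≤ t → G t = 0 := fun t ht => by
    have : {a | t < Z a} = ∅ := eq_empty_of_forall_notMem fun a ha =>
      (ht.trans_lt ha).not_gt (hZM a).2
    simp [G, this]
  have hG_bot : ∀ t ≤ -M, G t = 1 := fun t ht => by
    have : {a | t < Z a} = univ := eq_univ_of_forall fun a => ht.trans_lt (hZM a).1
    simp [G, this]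
  have hshift : ∫ a, Z a ∂μ + M = ∫ t in -M..M, G t := by
    have hint : Integrable Z μ := BddRV.integrable ⟨M₀, hM₀⟩ hZ
    have hnn : 0 ≤ᵐ[μ] fun a => Z a + M := ae_of_all _ fun a =>
      show 0 ≤ Z a + M by linarith [(hZM a).1]
    calc ∫ a, Z a ∂μ + M = ∫ a, (Z a + M) ∂μ := by
          rw [integral_add hint (integrable_const M), integral_const, probReal_univ, one_smul]
      _ = ∫ t in Ioi 0, G (t - M) := by
          rw [Integrable.integral_eq_integral_meas_lt (f := fun a => Z a + M)
            (hint.add (integrable_const M)) hnn]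
          simp_rw [G, sub_lt_iff_lt_add]
      _ = ∫ t in 0..2 * M, G (t - M) :=
          setIntegral_Ioi_eq_intervalIntegral (by positivity) fun t ht => hG_top _ (by linarith)
      _ = ∫ t in -M..M, G t := by
          rw [intervalIntegral.integral_comp_sub_right]; ring_nf
  rw [choquet, setIntegral_Iio_eq_intervalIntegral (neg_nonpos.2 hM.le)
      fun t ht => sub_eq_zero.2 (hG_bot t ht),
    setIntegral_Ioi_eq_intervalIntegral hM.le fun t ht => hG_top t ht.le,
    intervalIntegral.integral_sub hG_anti.intervalIntegrable intervalIntegrable_const,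
    intervalIntegral.integral_const]
  rw [← intervalIntegral.integral_add_adjacent_intervals (b := 0)
      hG_anti.intervalIntegrable hG_anti.intervalIntegrable] at hshift
  simp only [smul_eq_mul, mul_one, sub_neg_eq_add, zero_add] at hshift ⊢
  linarith

theorem Measurable.iSup_comp_apply {Ω ι : Type*} [MeasurableSpace Ω] [Countable ι]
    {X : Ω → ℝ} (hX : Measurable X) : Measurable fun ω : ι → Ω => ⨆ i, X (ω i) :=
  Measurable.iSup fun i => hX.comp (measurable_pi_apply i)

theorem integrable_iSup_comp_apply {Ω ι : Type*} [MeasurableSpace Ω] [Finite ι] [Nonempty ι]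
    {μ : Measure (ι → Ω)} [IsFiniteMeasure μ] {X : Ω → ℝ}
    (hX : Measurable X) (hb : BddRV X) : Integrable (fun ω : ι → Ω => ⨆ i, X (ω i)) μ :=
  hb.iSup_comp_apply.integrable hX.iSup_comp_apply.aestronglyMeasurable

theorem measureReal_lt_iSup_pi {Ω ι : Type*} [MeasurableSpace Ω] [Fintype ι] [Nonempty ι]
    (P : Measure Ω) [IsProbabilityMeasure P] {X : Ω → ℝ} (hX : Measurable X) (t : ℝ) :
    (Measure.pi fun _ : ι => P).real {ω | t < ⨆ i, X (ω i)}
      = 1 - (1 - P.real {x | t < X x}) ^ Fintype.card ι := by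
  have hmeas : MeasurableSet {x | t < X x} := hX measurableSet_Ioi
  have hset : {ω : ι → Ω | t < ⨆ i, X (ω i)} = (univ.pi fun _ => {x | t < X x}ᶜ)ᶜ := by
    ext ω
    simp [lt_ciSup_iff (Finite.bddAbove_range _)]
  rw [hset, probReal_compl_eq_one_sub (MeasurableSet.univ_pi fun _ => hmeas.compl),
    measureReal_def, Measure.pi_pi, ENNReal.toReal_prod, Finset.prod_const, ← measureReal_def,
    probReal_compl_eq_one_sub hmeas, Finset.card_univ]

theorem minvar_const_mul {Ω : Type*} [MeasurableSpace Ω] (P : Measure Ω) (n : ℕ)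
    (X : Ω → ℝ) {l : ℝ} (hl : 0 ≤ l) : MINVAR P n (fun ω => l * X ω) = l * MINVAR P n X := by
  simp_rw [MINVAR, ← Real.mul_iSup_of_nonneg hl, integral_const_mul]

section Minvar

variable {Ω : Type*} [MeasurableSpace Ω] {P : Measure Ω} {n : ℕ} [NeZero n] {X Y : Ω → ℝ}

theorem minvar_mono [IsFiniteMeasure P] (hX : Measurable X) (hY : Measurable Y) (hbX : BddRV X)
    (hbY : BddRV Y) (h : ∀ ω, X ω ≤ Y ω) : MINVAR P n X ≤ MINVAR P n Y :=
  integral_mono (integrable_iSup_comp_apply hX hbX) (integrable_iSup_comp_apply hY hbY) fun ω =>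
    ciSup_mono (Finite.bddAbove_range _) fun i => h (ω i)

theorem minvar_add_le [IsFiniteMeasure P] (hX : Measurable X) (hY : Measurable Y)
    (hbX : BddRV X) (hbY : BddRV Y) :
    MINVAR P n (fun ω => X ω + Y ω) ≤ MINVAR P n X + MINVAR P n Y := by
  rw [MINVAR, MINVAR, MINVAR, ← integral_add (integrable_iSup_comp_apply hX hbX)
    (integrable_iSup_comp_apply hY hbY)]
  exact integral_mono (integrable_iSup_comp_apply (hX.add hY) (hbX.add hbY))
    ((integrable_iSup_comp_apply hX hbX).add (integrable_iSup_comp_apply hY hbY)) fun ω =>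
      ciSup_add_le_ciSup_add_ciSup (Finite.bddAbove_range _) (Finite.bddAbove_range _)

theorem minvar_add_of_comonotonic [IsFiniteMeasure P] (hX : Measurable X) (hY : Measurable Y)
    (hbX : BddRV X) (hbY : BddRV Y) (h : Comonotonic X Y) :
    MINVAR P n (fun ω => X ω + Y ω) = MINVAR P n X + MINVAR P n Y := by
  simp_rw [MINVAR, ciSup_add_eq_of_comonotone fun i j => h _ _]
  exact integral_add (integrable_iSup_comp_apply hX hbX) (integrable_iSup_comp_apply hY hbY)

variable [IsProbabilityMeasure P]

theorem minvar_add_const (hX : Measurable X) (hb : BddRV X) (c : ℝ) :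
    MINVAR P n (fun ω => X ω + c) = MINVAR P n X + c := by
  have hsup : ∀ ω : Fin n → Ω, ⨆ i, (X (ω i) + c) = (⨆ i, X (ω i)) + c := fun ω =>
    ((OrderIso.addRight c).map_ciSup (Finite.bddAbove_range _)).symm
  simp_rw [MINVAR, hsup]
  rw [integral_add (integrable_iSup_comp_apply hX hb) (integrable_const c), integral_const,
    probReal_univ, one_smul]

theorem minvar_eq_choquet (hX : Measurable X) (hb : BddRV X) :
    MINVAR P n X = choquet (fun A => 1 - (1 - P.real A) ^ n) X := by
  rw [MINVAR, integral_eq_choquet _ hX.iSup_comp_apply.aestronglyMeasurable hb.iSup_comp_apply]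
  simp only [choquet, measureReal_lt_iSup_pi P hX, Fintype.card_fin]

end Minvar

theorem minvar_choquet_coherent_comonotonic_additive {Ω : Type*} [MeasurableSpace Ω]
    (P : Measure Ω) [IsProbabilityMeasure P] (n : ℕ) (hn : 0 < n) :
    (∀ X : Ω → ℝ, Measurable X → BddRV X →
        MINVAR P n X = choquet (fun A => 1 - (1 - (P A).toReal) ^ n) X) ∧
    (∀ A B : Set Ω, MeasurableSet A → MeasurableSet B →
        (1 - (1 - (P (A ∪ B)).toReal) ^ n) + (1 - (1 - (P (A ∩ B)).toReal) ^ n)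
          ≤ (1 - (1 - (P A).toReal) ^ n) + (1 - (1 - (P B).toReal) ^ n)) ∧
    (∀ X : Ω → ℝ, Measurable X → BddRV X → ∀ c : ℝ,
        MINVAR P n (fun ω => X ω + c) = MINVAR P n X + c) ∧
    (∀ X Y : Ω → ℝ, Measurable X → Measurable Y → BddRV X → BddRV Y →
        (∀ ω, X ω ≤ Y ω) → MINVAR P n X ≤ MINVAR P n Y) ∧
    (∀ X : Ω → ℝ, Measurable X → BddRV X → ∀ l : ℝ, 0 < l →
        MINVAR P n (fun ω => l * X ω) = l * MINVAR P n X) ∧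
    (∀ X Y : Ω → ℝ, Measurable X → Measurable Y → BddRV X → BddRV Y →
        MINVAR P n (fun ω => X ω + Y ω) ≤ MINVAR P n X + MINVAR P n Y) ∧
    (∀ X Y : Ω → ℝ, Measurable X → Measurable Y → BddRV X → BddRV Y →
        Comonotonic X Y →
        MINVAR P n (fun ω => X ω + Y ω) = MINVAR P n X + MINVAR P n Y) := by
  have : NeZero n := ⟨hn.ne'⟩
  have hψ : ConcaveOn ℝ (Icc 0 1) fun p : ℝ => 1 - (1 - p) ^ n :=
    (concaveOn_one_sub_one_sub_pow n).subset Icc_subset_Iic_self (convex_Icc 0 1)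
  exact ⟨fun X hX hb => minvar_eq_choquet hX hb,
    fun A B _ hB => hψ.measureReal_union_add_inter_le hB,
    fun X hX hb c => minvar_add_const hX hb c,
    fun X Y hX hY hbX hbY h => minvar_mono hX hY hbX hbY h,
    fun X _ _ l hl => minvar_const_mul P n X hl.le,
    fun X Y hX hY hbX hbY => minvar_add_le hX hY hbX hbY,
    fun X Y hX hY hbX hbY h => minvar_add_of_comonotonic hX hY hbX hbY h⟩
end

section
/- For random variables Z ≥ 0 and Y on a probability space (Ω, F, Q), the Hardy–Littlewood inequality holds: E^Q[ZY] ≤ ∫_0^1 F^{-1}_{Z,Q}(u) F^{-1}_{Y,Q}(u) du, with equality when Y = F^{-1}_{Y,Q}(U) and Z = F^{-1}_{Z,Q}(U) for a common uniform U. -/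
/-!
Let `λ` be Lebesgue measure on `(0, 1)` and `F_W` the distribution function of `W`. For
`u ∈ (0, 1)` the quantile function is the lower adjoint of `F_W`:
`quantile Q W u ≤ x ↔ u ≤ F_W x`. Hence `{u | s < quantile Q W u}` is the interval
`(F_W s, 1)`, so `quantile Q W` has the law of `W` under `λ`, and two quantile functions are
comonotone: `λ(s < q_Z, t < q_Y) = min (Q(s < Z)) (Q(t < Y)) ≥ Q(s < Z, t < Y)`.
Integrating over `s, t > 0` (layer cake for a product) gives the inequality for `Y ≥ 0`; a
bounded `Y` is shifted by a constant, which shifts its quantile function by the same constant.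
If `Z` and `Y` are the quantile functions evaluated at a common uniform `U`, both sides are the
same integral, pushed forward along `U`.
-/

open MeasureTheory Set

/-- Left-continuous quantile function of `W` under `Q`. -/
noncomputable def quantile {Ω : Type*} [MeasurableSpace Ω] (Q : Measure Ω) (W : Ω → ℝ)
    (u : ℝ) : ℝ :=
  sInf {x : ℝ | u ≤ (Q {ω | W ω ≤ x}).toReal}

open ProbabilityTheory Filter

lemma lintegral_ofReal_mul_eq_lintegral_lintegral_meas_lt {α : Type*} [MeasurableSpace α]
    (μ : Measure α) [SFinite μ] {f g : α → ℝ} (hf : AEMeasurable f μ)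
    (hg : AEMeasurable g μ) (hf0 : 0 ≤ᵐ[μ] f) (hg0 : 0 ≤ᵐ[μ] g) :
    ∫⁻ a, ENNReal.ofReal (f a) * ENNReal.ofReal (g a) ∂μ =
      ∫⁻ s in Ioi 0, ∫⁻ t in Ioi 0, μ ({a | s < f a} ∩ {a | t < g a}) := by
  set ν := μ.withDensity fun a => ENNReal.ofReal (g a)
  have hνμ : ν ≪ μ := withDensity_absolutelyContinuous _ _
  calc ∫⁻ a, ENNReal.ofReal (f a) * ENNReal.ofReal (g a) ∂μ
      = ∫⁻ a, ENNReal.ofReal (f a) ∂ν := by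
        rw [lintegral_withDensity_eq_lintegral_mul₀ hg.ennreal_ofReal hf.ennreal_ofReal]
        simp only [Pi.mul_apply, mul_comm]
    _ = ∫⁻ s in Ioi 0, ∫⁻ a in {a | s < f a}, ENNReal.ofReal (g a) ∂μ := by
        rw [lintegral_eq_lintegral_meas_lt ν (hνμ.ae_le hf0) (hf.mono' hνμ)]
        simp only [ν, withDensity_apply']
    _ = ∫⁻ s in Ioi 0, ∫⁻ t in Ioi 0, μ ({a | s < f a} ∩ {a | t < g a}) := by
        refine lintegral_congr fun s => ?_
        rw [lintegral_eq_lintegral_meas_lt _ (ae_restrict_of_ae hg0) hg.restrict]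
        refine lintegral_congr fun t => ?_
        rw [Measure.restrict_apply₀ (nullMeasurableSet_lt aemeasurable_const hg.restrict),
          inter_comm]

lemma sInf_setOf_le_cdf_le_iff (μ : Measure ℝ) {u : ℝ} (hu : u ∈ Ioo 0 1) (x : ℝ) :
    sInf {y | u ≤ cdf μ y} ≤ x ↔ u ≤ cdf μ x := by
  set S := {y | u ≤ cdf μ y}
  have hne : S.Nonempty := ((tendsto_cdf_atTop μ).eventually (eventually_ge_nhds hu.2)).exists
  have hbdd : BddBelow S := by
    obtain ⟨b, hb⟩ :=
      ((tendsto_cdf_atBot μ).eventually (eventually_lt_nhds hu.1)).exists_forall_of_atBot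
    exact ⟨b, fun y hy => le_of_not_gt fun hyb => (hb y hyb.le).not_ge hy⟩
  refine ⟨fun h => ?_, fun h => csInf_le hbdd h⟩
  have hmem : u ≤ cdf μ (sInf S) := by
    refine ge_of_tendsto ((cdf μ).right_continuous _ |>.mono Ioi_subset_Ici_self)
      (eventually_nhdsWithin_of_forall fun y hy => ?_)
    obtain ⟨z, hz, hzy⟩ := exists_lt_of_csInf_lt hne hy
    exact hz.trans (monotone_cdf μ hzy.le)
  exact hmem.trans (monotone_cdf μ h)

section

variable {Ω : Type*} [MeasurableSpace Ω] {Q : Measure Ω} [IsProbabilityMeasure Q]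
  {V W Y Z : Ω → ℝ}

lemma cdf_map_apply (hW : AEMeasurable W Q) (x : ℝ) :
    cdf (Q.map W) x = (Q {ω | W ω ≤ x}).toReal := by
  have : IsProbabilityMeasure (Q.map W) := Measure.isProbabilityMeasure_map hW
  rw [cdf_eq_real, measureReal_def, Measure.map_apply_of_aemeasurable hW measurableSet_Iic]
  rfl

lemma quantile_eq_sInf_cdf (hW : AEMeasurable W Q) (u : ℝ) :
    quantile Q W u = sInf {x | u ≤ cdf (Q.map W) x} := by
  simp only [quantile, cdf_map_apply hW]

lemma quantile_le_iff (hW : AEMeasurable W Q) {u : ℝ} (hu : u ∈ Ioo 0 1) (x : ℝ) :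
    quantile Q W u ≤ x ↔ u ≤ cdf (Q.map W) x := by
  rw [quantile_eq_sInf_cdf hW, sInf_setOf_le_cdf_le_iff _ hu]

lemma lt_quantile_iff (hW : AEMeasurable W Q) {u : ℝ} (hu : u ∈ Ioo 0 1) (x : ℝ) :
    x < quantile Q W u ↔ cdf (Q.map W) x < u := by
  simpa only [not_le] using (quantile_le_iff hW hu x).not

lemma monotoneOn_quantile (hW : AEMeasurable W Q) : MonotoneOn (quantile Q W) (Ioo 0 1) :=
  fun _ hu _ hv huv =>
    (quantile_le_iff hW hu _).2 <| huv.trans <| (quantile_le_iff hW hv _).1 le_rfl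

lemma aemeasurable_quantile (hW : AEMeasurable W Q) :
    AEMeasurable (quantile Q W) (volume.restrict (Ioo 0 1)) :=
  aemeasurable_restrict_of_monotoneOn measurableSet_Ioo (monotoneOn_quantile hW)

lemma le_quantile_of_ae_le (hW : AEMeasurable W Q) {c : ℝ} (hc : ∀ᵐ ω ∂Q, c ≤ W ω)
    {u : ℝ} (hu : u ∈ Ioo 0 1) : c ≤ quantile Q W u := by
  refine le_of_forall_lt fun x hx => (lt_quantile_iff hW hu x).2 ?_
  have : Q {ω | W ω ≤ x} = 0 := by
    rw [measure_eq_zero_iff_ae_notMem]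
    filter_upwards [hc] with ω hω using fun h => (hx.trans_le hω).not_ge h
  simpa [cdf_map_apply hW, this] using hu.1

lemma quantile_le_of_ae_le (hW : AEMeasurable W Q) {c : ℝ} (hc : ∀ᵐ ω ∂Q, W ω ≤ c)
    {u : ℝ} (hu : u ∈ Ioo 0 1) : quantile Q W u ≤ c := by
  refine (quantile_le_iff hW hu c).2 ?_
  have : Q {ω | W ω ≤ c} = 1 := by
    rw [(ae_iff_measure_eq (nullMeasurableSet_le hW aemeasurable_const)).1 hc, measure_univ]
  simpa [cdf_map_apply hW, this] using hu.2.le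

lemma quantile_add_const (hW : AEMeasurable W Q) (c : ℝ) {u : ℝ} (hu : u ∈ Ioo 0 1) :
    quantile Q (fun ω => W ω + c) u = quantile Q W u + c := by
  refine eq_of_forall_ge_iff fun x => ?_
  rw [quantile_le_iff (hW.add_const c) hu, ← le_sub_iff_add_le, quantile_le_iff hW hu,
    cdf_map_apply hW, cdf_map_apply (hW.add_const c)]
  simp_rw [← le_sub_iff_add_le]

lemma setOf_lt_quantile_inter_Ioo (hW : AEMeasurable W Q) (s : ℝ) :
    {u | s < quantile Q W u} ∩ Ioo 0 1 = Ioo (cdf (Q.map W) s) 1 := by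
  ext u
  refine ⟨fun ⟨hs, hu⟩ => ⟨(lt_quantile_iff hW hu s).1 hs, hu.2⟩, fun hu => ?_⟩
  have hu' : u ∈ Ioo 0 1 := ⟨(cdf_nonneg _ s).trans_lt hu.1, hu.2⟩
  exact ⟨(lt_quantile_iff hW hu' s).2 hu.1, hu'⟩

lemma measure_lt_eq_ofReal_one_sub_cdf (hW : AEMeasurable W Q) (s : ℝ) :
    Q {ω | s < W ω} = ENNReal.ofReal (1 - cdf (Q.map W) s) := by
  have : IsProbabilityMeasure (Q.map W) := Measure.isProbabilityMeasure_map hW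
  rw [ENNReal.ofReal_sub _ (cdf_nonneg _ s), ENNReal.ofReal_one, ofReal_cdf,
    ← prob_compl_eq_one_sub measurableSet_Iic, compl_Iic,
    Measure.map_apply_of_aemeasurable hW measurableSet_Ioi]
  rfl

lemma volume_setOf_lt_quantile_inter (hV : AEMeasurable V Q) (hW : AEMeasurable W Q) (s t : ℝ) :
    volume.restrict (Ioo 0 1) ({u | s < quantile Q V u} ∩ {u | t < quantile Q W u}) =
      min (Q {ω | s < V ω}) (Q {ω | t < W ω}) := by
  rw [Measure.restrict_apply' measurableSet_Ioo, inter_inter_distrib_right,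
    setOf_lt_quantile_inter_Ioo hV, setOf_lt_quantile_inter_Ioo hW, Ioo_inter_Ioo, inf_idem,
    Real.volume_Ioo, measure_lt_eq_ofReal_one_sub_cdf hV, measure_lt_eq_ofReal_one_sub_cdf hW,
    ← ENNReal.ofReal_min, sub_sup]

lemma map_quantile (hW : AEMeasurable W Q) :
    (volume.restrict (Ioo 0 1)).map (quantile Q W) = Q.map W := by
  have : IsProbabilityMeasure (volume.restrict (Ioo (0 : ℝ) 1)) := ⟨by simp⟩
  have := Measure.isProbabilityMeasure_map (aemeasurable_quantile hW)
  have := Measure.isProbabilityMeasure_map hW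
  refine Measure.ext_of_Iic _ _ fun x => ?_
  rw [← compl_Ioi, prob_compl_eq_one_sub measurableSet_Ioi,
    prob_compl_eq_one_sub measurableSet_Ioi,
    Measure.map_apply_of_aemeasurable (aemeasurable_quantile hW) measurableSet_Ioi,
    Measure.map_apply_of_aemeasurable hW measurableSet_Ioi,
    Measure.restrict_apply' measurableSet_Ioo,
    show quantile Q W ⁻¹' Ioi x = {u | x < quantile Q W u} from rfl,
    setOf_lt_quantile_inter_Ioo hW, Real.volume_Ioo, ← measure_lt_eq_ofReal_one_sub_cdf hW]
  rfl

lemma integrable_quantile (hW : Integrable W Q) :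
    Integrable (quantile Q W) (volume.restrict (Ioo 0 1)) := by
  have hW' := hW.aemeasurable
  have h : Integrable id (Q.map W) := (integrable_map_measure aestronglyMeasurable_id hW').2 hW
  rw [← map_quantile hW'] at h
  exact (integrable_map_measure aestronglyMeasurable_id (aemeasurable_quantile hW')).1 h

lemma integral_quantile (hW : AEMeasurable W Q) :
    ∫ u in Ioo 0 1, quantile Q W u = ∫ ω, W ω ∂Q :=
  calc ∫ u in Ioo 0 1, quantile Q W u
      = ∫ x, x ∂(volume.restrict (Ioo 0 1)).map (quantile Q W) :=
        (integral_map (aemeasurable_quantile hW) aestronglyMeasurable_id).symm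
    _ = ∫ x, x ∂Q.map W := by rw [map_quantile hW]
    _ = ∫ ω, W ω ∂Q := integral_map hW aestronglyMeasurable_id

lemma ae_nonneg_quantile (hW : AEMeasurable W Q) (hW0 : 0 ≤ᵐ[Q] W) :
    0 ≤ᵐ[volume.restrict (Ioo 0 1)] quantile Q W :=
  (ae_restrict_mem measurableSet_Ioo).mono fun _ hu => le_quantile_of_ae_le hW hW0 hu

lemma lintegral_mul_le_lintegral_quantile_mul (hZ : AEMeasurable Z Q) (hY : AEMeasurable Y Q)
    (hZ0 : 0 ≤ᵐ[Q] Z) (hY0 : 0 ≤ᵐ[Q] Y) :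
    ∫⁻ ω, ENNReal.ofReal (Z ω) * ENNReal.ofReal (Y ω) ∂Q ≤
      ∫⁻ u in Ioo 0 1, ENNReal.ofReal (quantile Q Z u) * ENNReal.ofReal (quantile Q Y u) := by
  rw [lintegral_ofReal_mul_eq_lintegral_lintegral_meas_lt Q hZ hY hZ0 hY0,
    lintegral_ofReal_mul_eq_lintegral_lintegral_meas_lt _ (aemeasurable_quantile hZ)
      (aemeasurable_quantile hY) (ae_nonneg_quantile hZ hZ0) (ae_nonneg_quantile hY hY0)]
  gcongr with s t
  rw [volume_setOf_lt_quantile_inter hZ hY]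
  exact le_min (measure_mono inter_subset_left) (measure_mono inter_subset_right)

lemma integral_mul_le_integral_quantile_mul_of_nonneg (hZ : AEMeasurable Z Q)
    (hY : AEMeasurable Y Q) (hZ0 : 0 ≤ᵐ[Q] Z) (hY0 : 0 ≤ᵐ[Q] Y)
    (hint : Integrable (fun u => quantile Q Z u * quantile Q Y u) (volume.restrict (Ioo 0 1))) :
    ∫ ω, Z ω * Y ω ∂Q ≤ ∫ u in Ioo 0 1, quantile Q Z u * quantile Q Y u := by
  have hqZ0 := ae_nonneg_quantile hZ hZ0
  rw [integral_eq_lintegral_of_nonneg_ae (f := fun ω => Z ω * Y ω)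
      (by filter_upwards [hZ0, hY0] with ω using mul_nonneg) (hZ.mul hY).aestronglyMeasurable,
    integral_eq_lintegral_of_nonneg_ae
      (by filter_upwards [hqZ0, ae_nonneg_quantile hY hY0] with u using mul_nonneg)
      hint.aestronglyMeasurable]
  refine ENNReal.toReal_mono hint.lintegral_lt_top.ne ?_
  calc ∫⁻ ω, ENNReal.ofReal (Z ω * Y ω) ∂Q
      = ∫⁻ ω, ENNReal.ofReal (Z ω) * ENNReal.ofReal (Y ω) ∂Q :=
        lintegral_congr_ae (hZ0.mono fun _ h => ENNReal.ofReal_mul h)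
    _ ≤ ∫⁻ u in Ioo 0 1, ENNReal.ofReal (quantile Q Z u) * ENNReal.ofReal (quantile Q Y u) :=
        lintegral_mul_le_lintegral_quantile_mul hZ hY hZ0 hY0
    _ = ∫⁻ u in Ioo 0 1, ENNReal.ofReal (quantile Q Z u * quantile Q Y u) :=
        lintegral_congr_ae (hqZ0.mono fun _ h => (ENNReal.ofReal_mul h).symm)

theorem integral_mul_le_integral_quantile_mul (hZ : Integrable Z Q) (hZ0 : 0 ≤ᵐ[Q] Z)
    (hY : AEMeasurable Y Q) {M : ℝ} (hYM : ∀ᵐ ω ∂Q, |Y ω| ≤ M) :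
    ∫ ω, Z ω * Y ω ∂Q ≤ ∫ u in Ioo 0 1, quantile Q Z u * quantile Q Y u := by
  have hqY : ∀ᵐ u ∂volume.restrict (Ioo 0 1), ‖quantile Q Y u‖ ≤ M :=
    (ae_restrict_mem measurableSet_Ioo).mono fun u hu => abs_le.2
      ⟨le_quantile_of_ae_le hY (hYM.mono fun _ h => (abs_le.1 h).1) hu,
        quantile_le_of_ae_le hY (hYM.mono fun _ h => (abs_le.1 h).2) hu⟩
  have hqZ := integrable_quantile hZ
  have hqZY := hqZ.mul_bdd (aemeasurable_quantile hY).aestronglyMeasurable hqY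
  have hZY := hZ.mul_bdd hY.aestronglyMeasurable hYM
  have hshift : (fun u => quantile Q Z u * quantile Q (fun ω => Y ω + M) u)
      =ᵐ[volume.restrict (Ioo 0 1)]
        fun u => quantile Q Z u * quantile Q Y u + quantile Q Z u * M :=
    (ae_restrict_mem measurableSet_Ioo).mono fun u hu => by
      dsimp only; rw [quantile_add_const hY M hu, mul_add]
  have key := integral_mul_le_integral_quantile_mul_of_nonneg hZ.aemeasurable (hY.add_const M) hZ0
    (hYM.mono fun ω h => show 0 ≤ Y ω + M by linarith [neg_abs_le (Y ω)])
    ((hqZY.add (hqZ.mul_const M)).congr hshift.symm)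
  simp only [mul_add] at key
  rw [integral_congr_ae hshift, integral_add hZY (hZ.mul_const M),
    integral_add hqZY (hqZ.mul_const M), integral_mul_const, integral_mul_const,
    integral_quantile hZ.aemeasurable] at key
  linarith

end

lemma map_eq_restrict_Ioc_of_measure_le_eq {Ω : Type*} [MeasurableSpace Ω] {Q : Measure Ω}
    [IsProbabilityMeasure Q] {U : Ω → ℝ} (hU : AEMeasurable U Q)
    (hUcdf : ∀ t ∈ Icc (0 : ℝ) 1, Q {ω | U ω ≤ t} = ENNReal.ofReal t) :
    Q.map U = volume.restrict (Ioc 0 1) := by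
  refine Measure.ext_of_Iic _ _ fun t => ?_
  rw [Measure.map_apply_of_aemeasurable hU measurableSet_Iic,
    Measure.restrict_apply measurableSet_Iic, inter_comm, Ioc_inter_Iic, Real.volume_Ioc, sub_zero]
  change Q {ω | U ω ≤ t} = _
  rcases lt_or_ge t 0 with ht0 | ht0
  · have : Q {ω | U ω ≤ t} ≤ Q {ω | U ω ≤ 0} := measure_mono fun _ h => le_trans h ht0.le
    rw [hUcdf 0 (by simp), ENNReal.ofReal_zero, nonpos_iff_eq_zero] at this
    rw [this, ENNReal.ofReal_of_nonpos (min_le_of_right_le ht0.le)]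
  rcases le_or_gt t 1 with ht1 | ht1
  · rw [hUcdf t ⟨ht0, ht1⟩, min_eq_right ht1]
  · have : Q {ω | U ω ≤ 1} ≤ Q {ω | U ω ≤ t} := measure_mono fun _ h => le_trans h ht1.le
    rw [hUcdf 1 (by simp), ENNReal.ofReal_one] at this
    rw [le_antisymm prob_le_one this, min_eq_left ht1.le, ENNReal.ofReal_one]

theorem hardy_littlewood_inequality {Ω : Type*} [MeasurableSpace Ω]
    (Q : Measure Ω) [IsProbabilityMeasure Q]
    (Z Y : Ω → ℝ) (hZm : Measurable Z) (hYm : Measurable Y)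
    (hZpos : ∀ ω, 0 ≤ Z ω) (hZint : Integrable Z Q)
    (hYb : ∃ M, ∀ ω, |Y ω| ≤ M) :
    (∫ ω, Z ω * Y ω ∂Q ≤ ∫ u in (0:ℝ)..1, quantile Q Z u * quantile Q Y u) ∧
    (∀ U : Ω → ℝ, Measurable U →
      (∀ t ∈ Set.Icc (0:ℝ) 1, Q {ω | U ω ≤ t} = ENNReal.ofReal t) →
      (∀ ω, Y ω = quantile Q Y (U ω)) → (∀ ω, Z ω = quantile Q Z (U ω)) →
      ∫ ω, Z ω * Y ω ∂Q = ∫ u in (0:ℝ)..1, quantile Q Z u * quantile Q Y u) := by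
  obtain ⟨M, hM⟩ := hYb
  rw [intervalIntegral.integral_of_le zero_le_one]
  refine ⟨?_, fun U hU hUcdf hYU hZU => ?_⟩
  · rw [integral_Ioc_eq_integral_Ioo]
    exact integral_mul_le_integral_quantile_mul hZint (ae_of_all _ hZpos) hYm.aemeasurable
      (ae_of_all _ hM)
  have hmap := map_eq_restrict_Ioc_of_measure_le_eq hU.aemeasurable hUcdf
  have hqZY : AEStronglyMeasurable (fun u => quantile Q Z u * quantile Q Y u) (Q.map U) := by
    rw [hmap, Measure.restrict_congr_set Ioo_ae_eq_Ioc.symm]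
    exact ((aemeasurable_quantile hZm.aemeasurable).mul
      (aemeasurable_quantile hYm.aemeasurable)).aestronglyMeasurable
  calc ∫ ω, Z ω * Y ω ∂Q = ∫ ω, quantile Q Z (U ω) * quantile Q Y (U ω) ∂Q := by
        congr with ω; rw [← hZU ω, ← hYU ω]
    _ = ∫ u in Ioc 0 1, quantile Q Z u * quantile Q Y u := by
        rw [← hmap, integral_map hU.aemeasurable hqZY]
end
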